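/- arXiv:math/0009116 — 9 statements merged into one kernel-verified Lean document; each statement's English description precedes it below -/
import Mathlib

section
/- Rice's integral representation: Let n ≥ 1 be an integer, let c = (n+1)/2 and let ρ be a real number with (n-1)/2 < ρ < (n+1)/2 (so the circle of radius ρ centered at c encloses the points 1, 2, …, n but not 0). If f : ℂ → ℂ is complex differentiable on the closed ball of radius ρ centered at c, then Σ_{k=1}^n C(n,k) (-1)^k f(k) = -(1/(2πi)) ∮_{|z-c|=ρ} [(-1)^{n-1} n! / (z(z-1)(z-2)⋯(z-n))] · f(z) dz, where the integral is the counterclockwise circle integral. -/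
/-!
Pascal's rule gives, by induction on `n`, the partial fraction decomposition
`(-1)^n n! / (z(z-1)⋯(z-n)) = ∑_{k=0}^n (-1)^k C(n,k) / (z-k)`.
Integrating it against `f` term by term, Cauchy's integral formula turns the terms with poles
`k = 1, …, n` inside the circle into `2πi (-1)^k C(n,k) f(k)`, while the term with pole `0`
outside the closed disk integrates to zero by Cauchy–Goursat.
-/

open scoped Real
open Complex Finset Metric

section PartialFractions

variable {K : Type*} [Field K]

theorem sum_range_succ_choose_div_sub (n : ℕ) (z : K) :
    ∑ k ∈ range (n + 2), (-1) ^ k * ((n + 1).choose k : K) / (z - k) =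
      ∑ k ∈ range (n + 1), (-1) ^ k * (n.choose k : K) / (z - k) -
        ∑ k ∈ range (n + 1), (-1) ^ k * (n.choose k : K) / (z - 1 - k) := by
  have pascal : ∀ k ∈ range (n + 1),
      (-1) ^ (k + 1) * ((n + 1).choose (k + 1) : K) / (z - (k + 1 : ℕ)) =
        (-1) ^ (k + 1) * (n.choose (k + 1) : K) / (z - (k + 1 : ℕ)) -
          (-1) ^ k * (n.choose k : K) / (z - 1 - k) := by
    intro k _
    rw [Nat.choose_succ_succ]
    push_cast
    ring
  have shift : ∑ k ∈ range (n + 1), (-1) ^ k * (n.choose k : K) / (z - k) =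
      ∑ k ∈ range (n + 1), (-1) ^ (k + 1) * (n.choose (k + 1) : K) / (z - (k + 1 : ℕ)) +
        1 / z := by
    have h := sum_range_succ' (fun k => (-1) ^ k * (n.choose k : K) / (z - k)) (n + 1)
    rw [sum_range_succ, Nat.choose_succ_self] at h
    simpa using h
  rw [sum_range_succ', sum_congr rfl pascal, sum_sub_distrib, shift]
  simp only [pow_zero, Nat.choose_zero_right, Nat.cast_one, mul_one, Nat.cast_zero, sub_zero]
  ring

theorem prod_range_succ_sub_natCast (n : ℕ) (z : K) :
    ∏ j ∈ range (n + 2), (z - j) = z * ∏ j ∈ range (n + 1), (z - 1 - j) := by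
  rw [prod_range_succ', mul_comm]
  push_cast
  simp only [sub_zero, sub_add_eq_sub_sub_swap, sub_right_comm]

theorem sum_range_choose_div_sub (n : ℕ) {z : K} (hz : ∀ j ∈ range (n + 1), z ≠ j) :
    ∑ k ∈ range (n + 1), (-1) ^ k * (n.choose k : K) / (z - k) =
      (-1) ^ n * n.factorial / ∏ j ∈ range (n + 1), (z - j) := by
  induction n generalizing z with
  | zero => simp
  | succ n ih =>
    have hz₀ : z ≠ 0 := by simpa using hz 0 (by simp)
    have hz' : ∀ j ∈ range (n + 1), z ≠ j := fun j hj =>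
      hz j (mem_range_succ_iff.2 (mem_range.1 hj).le)
    have hz'' : ∀ j ∈ range (n + 1), z - 1 ≠ j := fun j hj h =>
      hz (j + 1) (by simpa using hj) (by push_cast; linear_combination h)
    have hA : ∏ j ∈ range (n + 1), (z - j) ≠ 0 :=
      prod_ne_zero_iff.2 fun j hj => sub_ne_zero.2 (hz' j hj)
    have hB : ∏ j ∈ range (n + 1), (z - 1 - j) ≠ 0 :=
      prod_ne_zero_iff.2 fun j hj => sub_ne_zero.2 (hz'' j hj)
    have hAB := (prod_range_succ (fun j : ℕ => z - j) (n + 1)).symm.trans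
      (prod_range_succ_sub_natCast n z)
    rw [sum_range_succ_choose_div_sub, ih hz', ih hz'', prod_range_succ_sub_natCast,
      Nat.factorial_succ, div_sub_div _ _ hA hB,
      div_eq_div_iff (mul_ne_zero hA hB) (mul_ne_zero hz₀ hB)]
    push_cast at hAB ⊢
    linear_combination -(-1) ^ n * (n.factorial : K) * (∏ j ∈ range (n + 1), (z - 1 - j)) * hAB

theorem neg_one_pow_pred_mul_factorial_div_prod {n : ℕ} (hn : n ≠ 0) {z : K}
    (hz : ∀ j ∈ range (n + 1), z ≠ j) :
    (-1) ^ (n - 1) * n.factorial / ∏ j ∈ range (n + 1), (z - j) =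
      ∑ k ∈ range (n + 1), -((-1) ^ k * (n.choose k : K)) / (z - k) := by
  simp only [neg_div, sum_neg_distrib, sum_range_choose_div_sub n hz,
    ← pow_sub_one_mul hn (-1 : K), mul_neg_one, neg_mul, neg_neg]

end PartialFractions

section CauchyIntegral

variable {E : Type*} [NormedAddCommGroup E] [NormedSpace ℂ E] [CompleteSpace E]
  {f : ℂ → E} {c : ℂ} {R : ℝ}

open scoped Classical in
theorem circleIntegral_sub_inv_smul_of_notMem_sphere (hR : 0 ≤ R)
    (hf : DifferentiableOn ℂ f (closedBall c R)) {w : ℂ} (hw : w ∉ sphere c R) :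
    ∮ z in C(c, R), (z - w)⁻¹ • f z = if w ∈ ball c R then (2 * π * I : ℂ) • f w else 0 := by
  split_ifs with hwb
  · exact hf.circleIntegral_sub_inv_smul hwb
  · have hw' : w ∉ closedBall c R := by
      rw [← ball_union_sphere]
      exact fun h => h.elim hwb hw
    have hd : DifferentiableOn ℂ (fun z => (z - w)⁻¹ • f z) (closedBall c R) :=
      ((differentiableOn_id.sub_const w).inv fun z hz =>
        sub_ne_zero.2 (ne_of_mem_of_not_mem hz hw')).smul hf
    exact (hd.mono closure_ball_subset_closedBall).diffContOnCl.circleIntegral_eq_zero hR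

open scoped Classical in
theorem circleIntegral_sum_div_sub_smul {ι : Type*} (s : Finset ι) (a w : ι → ℂ) (hR : 0 ≤ R)
    (hf : DifferentiableOn ℂ f (closedBall c R)) (hw : ∀ i ∈ s, w i ∉ sphere c R) :
    ∮ z in C(c, R), (∑ i ∈ s, a i / (z - w i)) • f z =
      (2 * π * I : ℂ) • ∑ i ∈ s with w i ∈ ball c R, a i • f (w i) := by
  have hint : ∀ i ∈ s, CircleIntegrable (fun z => a i • (z - w i)⁻¹ • f z) c R := fun i hi =>
    (continuousOn_const.smul (((continuousOn_id.sub continuousOn_const).inv₀ fun z hz =>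
      sub_ne_zero.2 (ne_of_mem_of_not_mem hz (hw i hi))).smul
        (hf.continuousOn.mono sphere_subset_closedBall))).circleIntegrable hR
  conv_lhs => simp only [sum_smul, div_eq_mul_inv, mul_smul]
  rw [circleIntegral.integral_fun_sum hint, sum_filter, smul_sum]
  refine sum_congr rfl fun i hi => ?_
  rw [circleIntegral.integral_smul, circleIntegral_sub_inv_smul_of_notMem_sphere hR hf (hw i hi)]
  split_ifs
  · exact smul_comm (a i) (2 * π * I : ℂ) (f (w i))
  · simp only [smul_zero]

end CauchyIntegral

section Poles

theorem dist_natCast_half_succ (k n : ℕ) :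
    dist (k : ℂ) ((n + 1) / 2) = |(k : ℝ) - (n + 1) / 2| := by
  rw [Complex.dist_eq, ← Real.norm_eq_abs, ← Complex.norm_real]
  push_cast
  rfl

variable {n k : ℕ} {ρ : ℝ}

theorem natCast_mem_ball_half_succ_iff (hk : k ≤ n) (hρ₁ : ((n : ℝ) - 1) / 2 < ρ)
    (hρ₂ : ρ < ((n : ℝ) + 1) / 2) : (k : ℂ) ∈ ball ((n + 1) / 2 : ℂ) ρ ↔ 1 ≤ k := by
  have hk' : (k : ℝ) ≤ n := by exact_mod_cast hk
  rw [mem_ball, dist_natCast_half_succ]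
  constructor
  · intro h
    by_contra! hk0
    simp only [Nat.lt_one_iff.1 hk0, Nat.cast_zero, zero_sub, abs_neg] at h
    exact (h.trans hρ₂).not_ge (le_abs_self _)
  · intro h1
    have h1' : (1 : ℝ) ≤ k := by exact_mod_cast h1
    exact (abs_le.2 ⟨by linarith, by linarith⟩).trans_lt hρ₁

theorem natCast_notMem_sphere_half_succ (hk : k ≤ n) (hρ₁ : ((n : ℝ) - 1) / 2 < ρ)
    (hρ₂ : ρ < ((n : ℝ) + 1) / 2) : (k : ℂ) ∉ sphere ((n + 1) / 2 : ℂ) ρ := by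
  rcases Nat.eq_zero_or_pos k with rfl | h1
  · rw [mem_sphere, dist_natCast_half_succ, Nat.cast_zero, zero_sub, abs_neg,
      abs_of_pos (by positivity)]
    exact hρ₂.ne'
  · exact fun h => (mem_sphere.1 h).not_lt
      (mem_ball.1 ((natCast_mem_ball_half_succ_iff hk hρ₁ hρ₂).2 h1))

open scoped Classical in
theorem filter_range_natCast_mem_ball_half_succ (hρ₁ : ((n : ℝ) - 1) / 2 < ρ)
    (hρ₂ : ρ < ((n : ℝ) + 1) / 2) :
    {k ∈ range (n + 1) | ((k : ℕ) : ℂ) ∈ ball ((n + 1) / 2 : ℂ) ρ} = Icc 1 n := by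
  ext k
  rw [mem_filter, mem_Icc, mem_range_succ_iff]
  exact ⟨fun ⟨hk, hb⟩ => ⟨(natCast_mem_ball_half_succ_iff hk hρ₁ hρ₂).1 hb, hk⟩,
    fun ⟨h1, hk⟩ => ⟨hk, (natCast_mem_ball_half_succ_iff hk hρ₁ hρ₂).2 h1⟩⟩

end Poles

/-- Rice's integral representation: for `f` analytic on a closed disk containing
`1, …, n` (but not `0`),
`∑_{k=1}^n C(n,k) (-1)^k f(k) = -(1/(2πi)) ∮ [n;z] f(z) dz` where
`[n;z] = (-1)^{n-1} n! / (z(z-1)⋯(z-n))`. -/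
theorem rice_integral_representation (n : ℕ) (hn : 1 ≤ n)
    (c : ℂ) (hc : c = (n + 1) / 2)
    (ρ : ℝ) (hρ₁ : ((n : ℝ) - 1) / 2 < ρ) (hρ₂ : ρ < ((n : ℝ) + 1) / 2)
    (f : ℂ → ℂ) (hf : DifferentiableOn ℂ f (Metric.closedBall c ρ)) :
    ∑ k ∈ Finset.Icc 1 n, (n.choose k : ℂ) * (-1) ^ k * f k =
      -(1 / (2 * Real.pi * Complex.I)) *
        ∮ z in C(c, ρ),
          ((-1) ^ (n - 1) * (n.factorial : ℂ) / ∏ j ∈ Finset.range (n + 1), (z - j)) * f z := by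
  subst hc
  have hρ : 0 ≤ ρ := by
    have : (1 : ℝ) ≤ n := by exact_mod_cast hn
    linarith
  have hpoles : ∀ k ∈ range (n + 1), (k : ℂ) ∉ sphere ((n + 1) / 2 : ℂ) ρ := fun k hk =>
    natCast_notMem_sphere_half_succ (mem_range_succ_iff.1 hk) hρ₁ hρ₂
  have hkernel : Set.EqOn
      (fun z : ℂ => ((-1) ^ (n - 1) * (n.factorial : ℂ) / ∏ j ∈ range (n + 1), (z - j)) * f z)
      (fun z : ℂ => (∑ k ∈ range (n + 1), -((-1) ^ k * (n.choose k : ℂ)) / (z - k)) • f z)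
      (sphere ((n + 1) / 2 : ℂ) ρ) := fun z hz => by
    dsimp only
    rw [smul_eq_mul, neg_one_pow_pred_mul_factorial_div_prod (by omega)
      fun j hj h => hpoles j hj (h ▸ hz)]
  rw [circleIntegral.integral_congr hρ hkernel, circleIntegral_sum_div_sub_smul _ _ _ hρ hf hpoles,
    filter_range_natCast_mem_ball_half_succ hρ₁ hρ₂, smul_eq_mul, ← mul_assoc, neg_mul, one_div,
    inv_mul_cancel₀ (by simp [Real.pi_ne_zero]), neg_one_mul, ← sum_neg_distrib]
  refine sum_congr rfl fun k _ => ?_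
  rw [smul_eq_mul]
  ring
end

section
/- Fix real q with 0 < q < 1 and set p = 1-q. For integers m ≥ 0 and n with n ≥ m and n ≥ 1, the function g(w) = Σ_{h≥1} h·w·q^h·(w q^h)^m / ((1-w q^{h-1})(1-w q^h)) is well-defined and analytic for real w with |w| < 1, and its n-th Taylor coefficient at 0 (that is, the n-th iterated derivative of g at 0 divided by n!) equals (q/p)·(q^m - q^n)/(1-q^n)². -/
/-!
Partial fractions give `1 / ((1 - x) (1 - q x)) = ∑ₖ xᵏ (1 - q ^ (k + 1)) / (1 - q)`, so with
`x = w q ^ h` the function `g` becomes a double series in `(k, h)`. Summing first over `h`, with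
`∑ₕ (h + 1) rʰ = (1 - r)⁻²` for `r = q ^ (k + m + 1)`, yields the claimed coefficient of
`w ^ (k + m + 1)`. These coefficients are bounded by `q / (1 - q) ^ 3`, so the double series
converges absolutely for `|w| < 1`; hence the two orders of summation agree and `g` is given on
`(-1, 1)` by a power series, whose coefficients are the Taylor coefficients of `g` at `0`.
-/

open Finset FormalMultilinearSeries
open scoped Nat

theorem hasSum_inv_one_sub_mul_inv_one_sub_mul {𝕜 : Type*} [NormedField 𝕜] [CompleteSpace 𝕜]
    {x q : 𝕜} (hx : ‖x‖ < 1) (hqx : ‖q * x‖ < 1) (hq : q ≠ 1) :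
    HasSum (fun k ↦ x ^ k * (1 - q ^ (k + 1)) / (1 - q)) ((1 - x)⁻¹ * (1 - q * x)⁻¹) := by
  have h1x : 1 - x ≠ 0 := sub_ne_zero.2 (by rintro rfl; simp at hx)
  have h1qx : 1 - q * x ≠ 0 := sub_ne_zero.2 (by intro h; simp [← h] at hqx)
  -- partial fractions: `(1 - q) / ((1 - x) (1 - q x)) = 1 / (1 - x) - q / (1 - q x)`
  convert! ((hasSum_geometric_of_norm_lt_one hx).sub
    ((hasSum_geometric_of_norm_lt_one hqx).mul_left q)).div_const (1 - q) using 1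
  · ext k
    ring
  · rw [eq_div_iff (sub_ne_zero.2 hq.symm)]
    linear_combination (1 - x)⁻¹ * mul_inv_cancel₀ h1qx - q * (1 - q * x)⁻¹ * mul_inv_cancel₀ h1x

theorem HasFPowerSeriesAt.iteratedDeriv_eq_factorial_mul {𝕜 : Type*} [NontriviallyNormedField 𝕜]
    [CompleteSpace 𝕜] {f : 𝕜 → 𝕜} {c : ℕ → 𝕜} {x : 𝕜}
    (hf : HasFPowerSeriesAt f (ofScalars 𝕜 c) x) (n : ℕ) :
    iteratedDeriv n f x = n ! * c n := by
  obtain ⟨r, hr⟩ := hf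
  rw [iteratedDeriv_eq_iteratedFDeriv, ← hr.factorial_smul 1 n, ofScalars_apply_eq]
  simp

theorem hasFPowerSeriesOnBall_ofScalars_of_hasSum {𝕜 : Type*} [RCLike 𝕜] {f : 𝕜 → 𝕜}
    {c : ℕ → 𝕜} (hf : ∀ w : 𝕜, ‖w‖ < 1 → HasSum (fun n ↦ c n * w ^ n) (f w)) :
    HasFPowerSeriesOnBall f (ofScalars 𝕜 c) 0 1 where
  r_le := ENNReal.le_of_forall_nnreal_lt fun r hr ↦ by
    refine le_radius_of_tendsto _ (l := 0) ?_
    have hr1 : ‖((r : ℝ) : 𝕜)‖ < 1 := by simpa using hr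
    simpa [ofScalars_norm] using (hf _ hr1).summable.tendsto_atTop_zero.norm
  r_pos := one_pos
  hasSum {y} hy := by
    rw [zero_add]
    have hy1 : ‖y‖ < 1 := by simpa [enorm_eq_nnnorm, ← NNReal.coe_lt_one] using hy
    simpa [ofScalars_apply_eq, mul_comm] using hf _ hy1

theorem abs_mul_pow_lt_one {q w : ℝ} (hq : |q| ≤ 1) (hw : |w| < 1) (j : ℕ) : |w * q ^ j| < 1 := by
  rw [abs_mul, abs_pow]
  exact (mul_le_of_le_one_right (abs_nonneg w) (pow_le_one₀ (abs_nonneg q) hq)).trans_lt hw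

noncomputable def kernelSummand (q : ℝ) (m : ℕ) (w : ℝ) (h : ℕ) : ℝ :=
  ((h + 1 : ℝ) * w * q ^ (h + 1) * (w * q ^ (h + 1)) ^ m) /
    ((1 - w * q ^ h) * (1 - w * q ^ (h + 1)))

noncomputable def kernelCoeff (q : ℝ) (m K : ℕ) : ℝ :=
  if m < K then q * (q ^ m - q ^ K) / ((1 - q) * (1 - q ^ K) ^ 2) else 0

/-- The contribution of `kernelSummand q m w h` to the coefficient of `w ^ (k + m + 1)`, read off
from the partial-fraction expansion of `1 / ((1 - w q ^ h) (1 - w q ^ (h + 1)))`. -/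
noncomputable def kernelDoubleTerm (q : ℝ) (m : ℕ) (w : ℝ) (kh : ℕ × ℕ) : ℝ :=
  q ^ (m + 1) * (1 - q ^ (kh.1 + 1)) / (1 - q) * ((kh.2 + 1) * (q ^ (kh.1 + (m + 1))) ^ kh.2) *
    w ^ (kh.1 + (m + 1))

section Kernel

variable {q : ℝ}

theorem hasSum_kernelDoubleTerm_kernelSummand (hq : |q| < 1) (m : ℕ) {w : ℝ} (hw : |w| < 1)
    (h : ℕ) :
    HasSum (fun k ↦ kernelDoubleTerm q m w (k, h)) (kernelSummand q m w h) := by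
  have hqx : |q * (w * q ^ h)| < 1 := by
    rw [show q * (w * q ^ h) = w * q ^ (h + 1) by ring]
    exact abs_mul_pow_lt_one hq.le hw (h + 1)
  have hq1 : q ≠ 1 := by rintro rfl; simp at hq
  convert! (hasSum_inv_one_sub_mul_inv_one_sub_mul (abs_mul_pow_lt_one hq.le hw h) hqx
    hq1).mul_left ((h + 1 : ℝ) * w * q ^ (h + 1) * (w * q ^ (h + 1)) ^ m) using 1
  · ext k
    simp only [kernelDoubleTerm]
    ring
  · unfold kernelSummand
    rw [div_eq_mul_inv, mul_inv]
    ring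

theorem hasSum_kernelDoubleTerm_kernelCoeff (hq : |q| < 1) (m : ℕ) (w : ℝ) (k : ℕ) :
    HasSum (fun h ↦ kernelDoubleTerm q m w (k, h))
      (kernelCoeff q m (k + (m + 1)) * w ^ (k + (m + 1))) := by
  have hr : ‖q ^ (k + (m + 1))‖ < 1 := by
    rw [norm_pow]
    exact pow_lt_one₀ (norm_nonneg _) hq (by omega)
  have h1q : 1 - q ≠ 0 := sub_ne_zero.2 (by rintro rfl; simp at hq)
  have h1r : 1 - q ^ (k + (m + 1)) ≠ 0 := sub_ne_zero.2 (by intro h; simp [← h] at hr)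
  convert! ((hasSum_choose_mul_geometric_of_norm_lt_one 1 hr).mul_left
    (q ^ (m + 1) * (1 - q ^ (k + 1)) / (1 - q))).mul_right (w ^ (k + (m + 1))) using 1
  · ext h
    simp [kernelDoubleTerm]
  · unfold kernelCoeff
    rw [if_pos (by omega)]
    field_simp
    ring

theorem abs_kernelDoubleTerm (hq0 : 0 < q) (hq1 : q < 1) (m : ℕ) (w : ℝ) (kh : ℕ × ℕ) :
    |kernelDoubleTerm q m w kh| = kernelDoubleTerm q m |w| kh := by
  have hc : 0 ≤ q ^ (m + 1) * (1 - q ^ (kh.1 + 1)) / (1 - q) *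
      ((kh.2 + 1) * (q ^ (kh.1 + (m + 1))) ^ kh.2) :=
    mul_nonneg (div_nonneg (mul_nonneg (by positivity)
      (sub_nonneg.2 (pow_le_one₀ hq0.le hq1.le))) (sub_nonneg.2 hq1.le)) (by positivity)
  rw [kernelDoubleTerm, kernelDoubleTerm, abs_mul, abs_of_nonneg hc, abs_pow]

theorem kernelCoeff_le (hq0 : 0 < q) (hq1 : q < 1) (m K : ℕ) :
    kernelCoeff q m K ≤ q / (1 - q) ^ 3 := by
  have h1q : 0 < 1 - q := sub_pos.2 hq1
  unfold kernelCoeff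
  split_ifs with hK
  · have hqK : q ^ K ≤ q := pow_le_of_le_one hq0.le hq1.le (by omega)
    refine div_le_div₀ hq0.le ?_ (by positivity) ?_
    · nlinarith [pow_le_one₀ hq0.le hq1.le (n := m), pow_pos hq0 K]
    · rw [pow_succ']
      gcongr
  · positivity

theorem summable_kernelDoubleTerm (hq0 : 0 < q) (hq1 : q < 1) (m : ℕ) {w : ℝ} (hw : |w| < 1) :
    Summable (kernelDoubleTerm q m w) := by
  have hfiber (k : ℕ) : HasSum (fun h ↦ |kernelDoubleTerm q m w (k, h)|)
      (kernelCoeff q m (k + (m + 1)) * |w| ^ (k + (m + 1))) := by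
    simpa only [abs_kernelDoubleTerm hq0 hq1] using
      hasSum_kernelDoubleTerm_kernelCoeff (abs_lt.2 ⟨by linarith, hq1⟩) m |w| k
  refine Summable.of_abs ((summable_prod_of_nonneg fun _ ↦ abs_nonneg _).2
    ⟨fun k ↦ (hfiber k).summable, ?_⟩)
  refine Summable.of_nonneg_of_le (fun k ↦ tsum_nonneg fun _ ↦ abs_nonneg _) (fun k ↦ ?_)
    (((summable_nat_add_iff (m + 1)).2
      (summable_geometric_of_lt_one (abs_nonneg w) hw)).mul_left (q / (1 - q) ^ 3))
  rw [(hfiber k).tsum_eq]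
  exact mul_le_mul_of_nonneg_right (kernelCoeff_le hq0 hq1 m _) (pow_nonneg (abs_nonneg w) _)

theorem hasSum_kernelSummand (hq0 : 0 < q) (hq1 : q < 1) (m : ℕ) {w : ℝ} (hw : |w| < 1) :
    HasSum (kernelSummand q m w) (∑' kh, kernelDoubleTerm q m w kh) :=
  ((Equiv.prodComm ℕ ℕ).hasSum_iff.2 (summable_kernelDoubleTerm hq0 hq1 m hw).hasSum).prod_fiberwise
    (hasSum_kernelDoubleTerm_kernelSummand (abs_lt.2 ⟨by linarith, hq1⟩) m hw)

theorem hasSum_kernelCoeff_mul_pow (hq0 : 0 < q) (hq1 : q < 1) (m : ℕ) {w : ℝ} (hw : |w| < 1) :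
    HasSum (fun K ↦ kernelCoeff q m K * w ^ K) (∑' kh, kernelDoubleTerm q m w kh) := by
  have hlow : ∑ K ∈ range (m + 1), kernelCoeff q m K * w ^ K = 0 :=
    sum_eq_zero fun K hK ↦ by
      rw [kernelCoeff, if_neg (by simp at hK; omega), zero_mul]
  rw [← hasSum_nat_add_iff' (m + 1), hlow, sub_zero]
  exact (summable_kernelDoubleTerm hq0 hq1 m hw).hasSum.prod_fiberwise
    (hasSum_kernelDoubleTerm_kernelCoeff (abs_lt.2 ⟨by linarith, hq1⟩) m w)

theorem kernelCoeff_of_le {m n : ℕ} (hmn : m ≤ n) :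
    kernelCoeff q m n = q / (1 - q) * (q ^ m - q ^ n) / (1 - q ^ n) ^ 2 := by
  rcases hmn.lt_or_eq with hmn | rfl
  · rw [kernelCoeff, if_pos hmn, mul_div_assoc (q / (1 - q)), div_mul_div_comm]
  · simp [kernelCoeff]

end Kernel

theorem taylor_coeff_value_kernel_general (q : ℝ) (hq0 : 0 < q) (hq1 : q < 1)
    (p : ℝ) (hp : p = 1 - q) (m n : ℕ) (hmn : m ≤ n)
    (g : ℝ → ℝ)
    (hg : g = fun w : ℝ => ∑' h : ℕ,
      ((h + 1 : ℝ) * w * q ^ (h + 1) * (w * q ^ (h + 1)) ^ m) /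
        ((1 - w * q ^ h) * (1 - w * q ^ (h + 1)))) :
    (∀ w : ℝ, |w| < 1 → Summable (fun h : ℕ =>
      ((h + 1 : ℝ) * w * q ^ (h + 1) * (w * q ^ (h + 1)) ^ m) /
        ((1 - w * q ^ h) * (1 - w * q ^ (h + 1))))) ∧
    AnalyticOnNhd ℝ g {w : ℝ | |w| < 1} ∧
    iteratedDeriv n g 0 / n.factorial = (q / p) * (q ^ m - q ^ n) / (1 - q ^ n) ^ 2 := by
  subst hp
  obtain rfl : g = fun w ↦ ∑' h, kernelSummand q m w h := hg
  have hseries : HasFPowerSeriesOnBall (fun w ↦ ∑' h, kernelSummand q m w h)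
      (ofScalars ℝ (kernelCoeff q m)) 0 1 :=
    hasFPowerSeriesOnBall_ofScalars_of_hasSum fun w hw ↦ by
      rw [Real.norm_eq_abs] at hw
      rw [(hasSum_kernelSummand hq0 hq1 m hw).tsum_eq]
      exact hasSum_kernelCoeff_mul_pow hq0 hq1 m hw
  refine ⟨fun w hw ↦ (hasSum_kernelSummand hq0 hq1 m hw).summable,
    fun w hw ↦ hseries.analyticAt_of_mem ?_, ?_⟩
  · simpa [enorm_eq_nnnorm, ← NNReal.coe_lt_one] using hw
  · rw [hseries.hasFPowerSeriesAt.iteratedDeriv_eq_factorial_mul, kernelCoeff_of_le hmn,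
      mul_div_cancel_left₀ _ (by positivity)]

/-- For `0 < q < 1`, `p = 1 - q`, `0 ≤ m ≤ n`, `1 ≤ n`, the function
`g(w) = Σ_{h≥1} h·w·q^h·(w q^h)^m / ((1-w q^{h-1})(1-w q^h))` is well defined and
analytic for `|w| < 1`, and its `n`-th Taylor coefficient at `0` equals
`(q/p)·(q^m - q^n)/(1-q^n)²`. -/
theorem taylor_coeff_value_kernel (q : ℝ) (hq0 : 0 < q) (hq1 : q < 1)
    (p : ℝ) (hp : p = 1 - q) (m n : ℕ) (hmn : m ≤ n) (hn : 1 ≤ n)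
    (g : ℝ → ℝ)
    (hg : g = fun w : ℝ => ∑' h : ℕ,
      ((h + 1 : ℝ) * w * q ^ (h + 1) * (w * q ^ (h + 1)) ^ m) /
        ((1 - w * q ^ h) * (1 - w * q ^ (h + 1)))) :
    (∀ w : ℝ, |w| < 1 → Summable (fun h : ℕ =>
      ((h + 1 : ℝ) * w * q ^ (h + 1) * (w * q ^ (h + 1)) ^ m) /
        ((1 - w * q ^ h) * (1 - w * q ^ (h + 1))))) ∧
    AnalyticOnNhd ℝ g {w : ℝ | |w| < 1} ∧
    iteratedDeriv n g 0 / n.factorial = (q / p) * (q ^ m - q ^ n) / (1 - q ^ n) ^ 2 :=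
  taylor_coeff_value_kernel_general q hq0 hq1 p hp m n hmn g hg
end

section
/- Fix real q with 0 < q < 1 and set Q = 1/q. For integers r ≥ 2 and k ≥ 1, define φ_r(k) = Σ_{0 < l_1 < ⋯ < l_{r-1} < k} (∏_{j=1}^{r-1} 1/(Q^{l_j} - 1)) · (q^{l_{r-1}} - q^k). Then φ_r(k) equals the negative of the coefficient of x^{r-1} in the real polynomial (q^k - 1) · [∏_{i=1}^{k} (1 - (1-x)q^i)] / [∏_{i=1}^{k} (1 - q^i)] + x·q · [∏_{i=1}^{k-1} (1 - (1-x)q^{i+1})] / [∏_{i=1}^{k-1} (1 - q^i)]. -/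
/-!
Writing `q ^ max A - q ^ k` as the telescoping sum of `q ^ j - q ^ (j + 1)` over
`max A ≤ j < k` and exchanging the two sums turns the generating polynomial
`∑_A w(A) (q ^ max A - q ^ k) x ^ |A|`, where `w(A) = ∏_{l ∈ A} q ^ l / (1 - q ^ l)`, into
`∑_{j < k} (q ^ j - q ^ (j + 1)) T_j`, where
`T_j = ∏_{i=1}^{j} (1 - (1 - x) q ^ i) / (1 - q ^ i)`.
The identity `(1 - q ^ (m + 1)) T_{m+1} = (1 - (1 - x) q) S_m`, with
`S_m = ∏_{i=1}^{m} (1 - (1 - x) q ^ (i + 1)) / (1 - q ^ i)`, makes this sum telescope to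
`(1 - q) S_{k-1}`, and shows that the polynomial of the statement evaluates to
`-(1 - q) S_{k-1}` as well.
-/

open Finset Polynomial

section Powerset

variable {R ι : Type*}

theorem sum_powerset_prod_mul_pow_card [CommSemiring R] (s : Finset ι) (c : ι → R) (x : R) :
    ∑ A ∈ s.powerset, (∏ i ∈ A, c i) * x ^ #A = ∏ i ∈ s, (1 + c i * x) := by
  simp only [prod_one_add, prod_mul_distrib, prod_const]

theorem sum_powerset_Ioo_mul_sub_sup [CommRing R] (f : Finset ℕ → R) (u : ℕ → R) (k : ℕ) :
    ∑ A ∈ (Ioo 0 k).powerset, f A * (u (A.sup id) - u k) =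
      ∑ j ∈ range k, (u j - u (j + 1)) * ∑ A ∈ (Icc 1 j).powerset, f A := by
  have telescope : ∀ A ∈ (Ioo 0 k).powerset,
      u (A.sup id) - u k = ∑ j ∈ Ico (A.sup id) k, (u j - u (j + 1)) := by
    intro A hA
    have hle : A.sup id ≤ k := Finset.sup_le fun a ha => (mem_Ioo.1 (mem_powerset.1 hA ha)).2.le
    simpa only [neg_sub_neg] using (sum_Ico_sub (fun i => -u i) hle).symm
  calc ∑ A ∈ (Ioo 0 k).powerset, f A * (u (A.sup id) - u k)
      = ∑ A ∈ (Ioo 0 k).powerset, ∑ j ∈ Ico (A.sup id) k, (u j - u (j + 1)) * f A := by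
        refine sum_congr rfl fun A hA => ?_
        rw [telescope A hA, mul_comm, sum_mul]
    _ = ∑ j ∈ range k, ∑ A ∈ (Icc 1 j).powerset, (u j - u (j + 1)) * f A := by
        refine sum_comm' fun A j => ?_
        simp only [mem_powerset, mem_Ico, mem_range, subset_iff, mem_Ioo, mem_Icc,
          Finset.sup_le_iff, id]
        constructor
        · rintro ⟨hA, hAj, hjk⟩
          exact ⟨fun a ha => ⟨(hA ha).1, hAj a ha⟩, hjk⟩
        · rintro ⟨hA, hjk⟩
          exact ⟨fun a ha => ⟨(hA ha).1, (hA ha).2.trans_lt hjk⟩, fun a ha => (hA ha).2,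
            hjk⟩
    _ = ∑ j ∈ range k, (u j - u (j + 1)) * ∑ A ∈ (Icc 1 j).powerset, f A := by
        simp only [mul_sum]

theorem sum_powersetCard_eq_coeff [Semiring R] (s : Finset ι) (f : Finset ι → R) (n : ℕ) :
    ∑ A ∈ s.powersetCard n, f A = (∑ A ∈ s.powerset, C (f A) * X ^ #A).coeff n := by
  rw [finsetSum_coeff, powersetCard_eq_filter, sum_filter]
  exact sum_congr rfl fun A _ => by rw [coeff_C_mul_X_pow]; exact if_congr eq_comm rfl rfl

end Powerset

theorem prod_Icc_one_succ_eq_mul {M : Type*} [CommMonoid M] (f : ℕ → M) (m : ℕ) :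
    ∏ i ∈ Icc 1 (m + 1), f i = f 1 * ∏ i ∈ Icc 1 m, f (i + 1) := by
  induction m with
  | zero => simp
  | succ m ih => rw [prod_Icc_succ_top (by omega), ih, prod_Icc_succ_top (by omega), mul_assoc]

section qSeries

variable {K : Type*} [Field K]

theorem one_div_one_div_pow_sub_one {q : K} (hq : q ≠ 0) (l : ℕ) :
    1 / ((1 / q) ^ l - 1) = q ^ l / (1 - q ^ l) := by
  have hql : q ^ l ≠ 0 := pow_ne_zero l hq
  rw [one_div_pow, div_sub_one hql, one_div_div]

variable {q : K}

theorem one_sub_pow_ne_zero (hq : ∀ n, 0 < n → q ^ n ≠ 1) {n : ℕ} (hn : 0 < n) :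
    1 - q ^ n ≠ 0 :=
  sub_ne_zero.2 (hq n hn).symm

theorem prod_Icc_one_sub_pow_ne_zero (hq : ∀ n, 0 < n → q ^ n ≠ 1) (m : ℕ) :
    ∏ i ∈ Icc 1 m, (1 - q ^ i) ≠ 0 :=
  prod_ne_zero_iff.2 fun _ hi => one_sub_pow_ne_zero hq (mem_Icc.1 hi).1

theorem one_sub_pow_succ_mul_prod_Icc (hq : ∀ n, 0 < n → q ^ n ≠ 1) (x : K) (m : ℕ) :
    (1 - q ^ (m + 1)) * ∏ i ∈ Icc 1 (m + 1), (1 - (1 - x) * q ^ i) / (1 - q ^ i) =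
      (1 - (1 - x) * q) * ∏ i ∈ Icc 1 m, (1 - (1 - x) * q ^ (i + 1)) / (1 - q ^ i) := by
  have h1 := prod_Icc_one_sub_pow_ne_zero hq m
  have h2 := one_sub_pow_ne_zero hq m.succ_pos
  rw [prod_div_distrib, prod_div_distrib, prod_Icc_one_succ_eq_mul, prod_Icc_succ_top (by omega),
    pow_one]
  field_simp

theorem sum_range_sub_pow_mul_prod_Icc (hq : ∀ n, 0 < n → q ^ n ≠ 1) (x : K) (m : ℕ) :
    ∑ j ∈ range (m + 1),
        (q ^ j - q ^ (j + 1)) * ∏ i ∈ Icc 1 j, (1 - (1 - x) * q ^ i) / (1 - q ^ i) =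
      (1 - q) * ∏ i ∈ Icc 1 m, (1 - (1 - x) * q ^ (i + 1)) / (1 - q ^ i) := by
  induction m with
  | zero => simp
  | succ m ih =>
    have h2 := one_sub_pow_ne_zero hq m.succ_pos
    have shift := one_sub_pow_succ_mul_prod_Icc hq x m
    have hT : ∏ i ∈ Icc 1 (m + 1), (1 - (1 - x) * q ^ i) / (1 - q ^ i) =
        (1 - (1 - x) * q) * (∏ i ∈ Icc 1 m, (1 - (1 - x) * q ^ (i + 1)) / (1 - q ^ i)) /
          (1 - q ^ (m + 1)) := by
      rw [eq_div_iff h2, mul_comm, shift]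
    rw [sum_range_succ, ih, hT, prod_Icc_succ_top (by omega)]
    field_simp
    ring

theorem sum_powerset_Ioo_qWeight_eq_sum_range (hq0 : q ≠ 0) (hq : ∀ n, 0 < n → q ^ n ≠ 1)
    (x : K) (k : ℕ) :
    ∑ A ∈ (Ioo 0 k).powerset,
        (∏ l ∈ A, 1 / ((1 / q) ^ l - 1)) * (q ^ A.sup id - q ^ k) * x ^ #A =
      ∑ j ∈ range k,
        (q ^ j - q ^ (j + 1)) * ∏ i ∈ Icc 1 j, (1 - (1 - x) * q ^ i) / (1 - q ^ i) := by
  simp only [one_div_one_div_pow_sub_one hq0, mul_right_comm _ (q ^ _ - _)]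
  rw [sum_powerset_Ioo_mul_sub_sup]
  refine sum_congr rfl fun j _ => ?_
  rw [sum_powerset_prod_mul_pow_card]
  refine congrArg _ (prod_congr rfl fun i hi => ?_)
  have := one_sub_pow_ne_zero hq (mem_Icc.1 hi).1
  field_simp
  ring

end qSeries

theorem phi_r_coeff_formula_general (q : ℝ) (hq0 : 0 < q) (hq1 : q < 1)
    (Q : ℝ) (hQ : Q = 1 / q) (r k : ℕ) (hk : 1 ≤ k) :
    (∑ A ∈ (Finset.Ioo 0 k).powersetCard (r - 1),
      (∏ l ∈ A, 1 / (Q ^ l - 1)) * (q ^ (A.sup id) - q ^ k)) =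
      -((C ((q ^ k - 1) / ∏ i ∈ Finset.Icc 1 k, (1 - q ^ i)) *
          ∏ i ∈ Finset.Icc 1 k, (1 - (1 - X) * C (q ^ i)) +
        C (q / ∏ i ∈ Finset.Icc 1 (k - 1), (1 - q ^ i)) * X *
          ∏ i ∈ Finset.Icc 1 (k - 1), (1 - (1 - X) * C (q ^ (i + 1)))).coeff (r - 1)) := by
  obtain ⟨m, rfl⟩ := Nat.exists_eq_add_of_le' hk
  have hq : ∀ n, 0 < n → q ^ n ≠ 1 := fun n hn => (pow_lt_one₀ hq0.le hq1 hn.ne').ne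
  subst hQ
  rw [sum_powersetCard_eq_coeff, ← coeff_neg]
  congr 1
  refine Polynomial.funext fun x => ?_
  simp only [eval_finsetSum, eval_mul, eval_C, eval_pow, eval_X, eval_neg, eval_add, eval_prod,
    eval_sub, eval_one, Nat.add_sub_cancel]
  rw [sum_powerset_Ioo_qWeight_eq_sum_range hq0.ne' hq, sum_range_sub_pow_mul_prod_Icc hq,
    prod_div_distrib]
  have shift := one_sub_pow_succ_mul_prod_Icc hq x m
  rw [prod_div_distrib, prod_div_distrib] at shift
  linear_combination -shift

/-- For `0 < q < 1`, `Q = 1/q`, `r ≥ 2`, `k ≥ 1`: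
`φ_r(k) = Σ_{0<l_1<⋯<l_{r-1}<k} (∏ 1/(Q^{l_j}-1))·(q^{l_{r-1}} - q^k)`
(encoded as a sum over `(r-1)`-element subsets of `{1,…,k-1}`, with `l_{r-1}`
the largest element) equals minus the coefficient of `x^{r-1}` in
`(q^k-1)·∏_{i=1}^k (1-(1-x)q^i)/∏_{i=1}^k (1-q^i)
  + x·q·∏_{i=1}^{k-1} (1-(1-x)q^{i+1})/∏_{i=1}^{k-1} (1-q^i)`. -/
theorem phi_r_coeff_formula (q : ℝ) (hq0 : 0 < q) (hq1 : q < 1)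
    (Q : ℝ) (hQ : Q = 1 / q) (r k : ℕ) (hr : 2 ≤ r) (hk : 1 ≤ k) :
    (∑ A ∈ (Finset.Ioo 0 k).powersetCard (r - 1),
      (∏ l ∈ A, 1 / (Q ^ l - 1)) * (q ^ (A.sup id) - q ^ k)) =
      -((C ((q ^ k - 1) / ∏ i ∈ Finset.Icc 1 k, (1 - q ^ i)) *
          ∏ i ∈ Finset.Icc 1 k, (1 - (1 - X) * C (q ^ i)) +
        C (q / ∏ i ∈ Finset.Icc 1 (k - 1), (1 - q ^ i)) * X *
          ∏ i ∈ Finset.Icc 1 (k - 1), (1 - (1 - X) * C (q ^ (i + 1)))).coeff (r - 1)) :=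
  phi_r_coeff_formula_general q hq0 hq1 Q hQ r k hk
end

section
/- Fix real p, q with 0 < q < 1 and p = 1-q, and let n ≥ 1 be an integer. Let X_1, …, X_n be independent random variables, each geometrically distributed on {1,2,3,…} with P(X = k) = p·q^{k-1}. Then the expected value of max(X_1, …, X_n) equals Σ_{k=1}^{n} C(n,k)·(-1)^{k-1}/(1 - q^k). -/
/-!
Write `M = max_i X_i`. Since `M` is `ℕ`-valued, `E M = ∑_{m ≥ 0} P(M > m)`, and by independence
`P(M > m) = 1 - P(X_1 ≤ m)^n = 1 - (1 - q^m)^n`. Expanding by the binomial theorem gives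
`∑_{k=1}^n C(n,k) (-1)^(k-1) (q^k)^m`, and summing the geometric series in `m` gives the result.
-/

open MeasureTheory ProbabilityTheory
open scoped ENNReal

theorem ENNReal.natCast_eq_tsum_ite_lt (N : ℕ) :
    (N : ℝ≥0∞) = ∑' m : ℕ, if m < N then 1 else 0 := by
  rw [tsum_eq_sum (s := Finset.range N) (by simp)]
  simp [Finset.filter_true_of_mem fun m (hm : m ∈ Finset.range N) => Finset.mem_range.mp hm]

theorem one_sub_one_sub_pow_eq_sum {R : Type*} [CommRing R] (x : R) (n : ℕ) :
    1 - (1 - x) ^ n = ∑ k ∈ Finset.Icc 1 n, (n.choose k : R) * (-1) ^ (k - 1) * x ^ k := by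
  rw [← neg_add_eq_sub x, add_pow, Finset.range_eq_Ico,
    Finset.sum_eq_sum_Ico_succ_bot n.succ_pos, Nat.succ_eq_add_one, zero_add,
    Finset.Ico_add_one_right_eq_Icc]
  simp only [pow_zero, one_pow, Nat.choose_zero_right, Nat.cast_one, mul_one,
    sub_add_cancel_left, ← Finset.sum_neg_distrib]
  refine Finset.sum_congr rfl fun k hk => ?_
  obtain ⟨j, rfl⟩ : ∃ j, k = j + 1 := Nat.exists_eq_add_one.mpr (Finset.mem_Icc.mp hk).1
  rw [neg_pow, add_tsub_cancel_right, pow_succ (-1 : R)]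
  ring

theorem hasSum_one_sub_one_sub_pow_pow {q : ℝ} (hq0 : 0 ≤ q) (hq1 : q < 1) (n : ℕ) :
    HasSum (fun m : ℕ => 1 - (1 - q ^ m) ^ n)
      (∑ k ∈ Finset.Icc 1 n, (n.choose k : ℝ) * (-1) ^ (k - 1) / (1 - q ^ k)) := by
  simp only [one_sub_one_sub_pow_eq_sum]
  refine hasSum_sum fun k hk => ?_
  simp only [pow_right_comm q _ k]
  have hqk : q ^ k < 1 := pow_lt_one₀ hq0 hq1 (Nat.one_le_iff_ne_zero.mp (Finset.mem_Icc.mp hk).1)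
  simpa [div_eq_mul_inv] using (hasSum_geometric_of_lt_one (by positivity) hqk).mul_left _

section Probability

variable {Ω : Type*} [MeasurableSpace Ω] {μ : Measure Ω}

section TailSum

variable {M : Ω → ℕ}

theorem lintegral_natCast_eq_tsum_measure_lt (hM : Measurable M) :
    ∫⁻ ω, (M ω : ℝ≥0∞) ∂μ = ∑' m : ℕ, μ {ω | m < M ω} := by
  have hmeas (m : ℕ) : MeasurableSet {ω | m < M ω} := measurableSet_lt measurable_const hM
  calc ∫⁻ ω, (M ω : ℝ≥0∞) ∂μ
      = ∫⁻ ω, ∑' m : ℕ, {ω | m < M ω}.indicator 1 ω ∂μ := by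
        simp only [ENNReal.natCast_eq_tsum_ite_lt, Set.indicator_apply, Set.mem_ofPred_eq,
          Pi.one_apply]
    _ = ∑' m : ℕ, μ {ω | m < M ω} := by
        rw [lintegral_tsum fun m => (measurable_one.indicator (hmeas m)).aemeasurable]
        simp only [lintegral_indicator_one (hmeas _)]

theorem integral_natCast_eq_of_hasSum [IsFiniteMeasure μ] (hM : Measurable M) {f : ℕ → ℝ}
    {s : ℝ} (hf : HasSum f s) (htail : ∀ m, μ.real {ω | m < M ω} = f m) :
    ∫ ω, (M ω : ℝ) ∂μ = s := by
  have hf0 (m : ℕ) : 0 ≤ f m := htail m ▸ measureReal_nonneg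
  have hμ (m : ℕ) : μ {ω | m < M ω} = ENNReal.ofReal (f m) := by
    rw [← htail, ofReal_measureReal]
  rw [integral_eq_lintegral_of_nonneg_ae (.of_forall fun ω => Nat.cast_nonneg _)
    (measurable_from_top.comp hM).aestronglyMeasurable]
  simp only [ENNReal.ofReal_natCast, lintegral_natCast_eq_tsum_measure_lt hM, hμ]
  rw [← ENNReal.ofReal_tsum_of_nonneg hf0 hf.summable, hf.tsum_eq,
    ENNReal.toReal_ofReal (hf.nonneg hf0)]

theorem probReal_lt_eq_one_sub_probReal_le [IsProbabilityMeasure μ] (hM : Measurable M)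
    (m : ℕ) : μ.real {ω | m < M ω} = 1 - μ.real {ω | M ω ≤ m} := by
  rw [← probReal_compl_eq_one_sub (measurableSet_le hM measurable_const)]
  congr 1 with ω
  simp

end TailSum

section Geometric

variable {Y : Ω → ℕ} {q : ℝ}

theorem measure_lt_eq_pow_of_geometric (hY : Measurable Y) (hq0 : 0 ≤ q) (hq1 : q < 1)
    (hdist : ∀ k : ℕ, 1 ≤ k → μ {ω | Y ω = k} = ENNReal.ofReal ((1 - q) * q ^ (k - 1)))
    (m : ℕ) : μ {ω | m < Y ω} = ENNReal.ofReal (q ^ m) := by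
  have hsum : HasSum (fun j : ℕ => (1 - q) * q ^ (m + j)) (q ^ m) := by
    have h := (hasSum_geometric_of_lt_one hq0 hq1).mul_left ((1 - q) * q ^ m)
    rw [mul_right_comm _ (q ^ m), mul_inv_cancel₀ (sub_pos.mpr hq1).ne', one_mul] at h
    simpa only [pow_add, mul_assoc] using h
  have hunion : {ω | m < Y ω} = ⋃ j : ℕ, {ω | Y ω = m + 1 + j} := by
    ext ω
    simp only [Set.mem_ofPred_eq, Set.mem_iUnion]
    exact ⟨fun h => ⟨Y ω - (m + 1), by omega⟩, fun ⟨j, hj⟩ => by omega⟩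
  have hdisj : Pairwise (Function.onFun Disjoint fun j : ℕ => {ω | Y ω = m + 1 + j}) :=
    fun i j hij => Set.disjoint_left.mpr fun ω hi hj => hij (by simp_all)
  rw [hunion, measure_iUnion hdisj fun j => hY (measurableSet_singleton _), ← hsum.tsum_eq,
    ENNReal.ofReal_tsum_of_nonneg (fun j => by have := sub_pos.mpr hq1; positivity)
      hsum.summable]
  congr 1 with j
  rw [hdist _ (by omega), show m + 1 + j - 1 = m + j by omega]

theorem measureReal_le_eq_of_geometric [IsProbabilityMeasure μ] (hY : Measurable Y)
    (hq0 : 0 ≤ q) (hq1 : q < 1)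
    (hdist : ∀ k : ℕ, 1 ≤ k → μ {ω | Y ω = k} = ENNReal.ofReal ((1 - q) * q ^ (k - 1)))
    (m : ℕ) : μ.real {ω | Y ω ≤ m} = 1 - q ^ m := by
  have htail : μ.real {ω | m < Y ω} = q ^ m := by
    rw [measureReal_def, measure_lt_eq_pow_of_geometric hY hq0 hq1 hdist,
      ENNReal.toReal_ofReal (by positivity)]
  linarith [probReal_lt_eq_one_sub_probReal_le hY m (μ := μ)]

end Geometric

theorem ProbabilityTheory.iIndepFun.measureReal_sup_le {ι α : Type*} [Fintype ι]
    [SemilatticeSup α] [OrderBot α] [TopologicalSpace α] [ClosedIicTopology α]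
    [MeasurableSpace α] [OpensMeasurableSpace α] {X : ι → Ω → α} (hX : iIndepFun X μ) (a : α) :
    μ.real {ω | Finset.univ.sup (fun i => X i ω) ≤ a} = ∏ i, μ.real {ω | X i ω ≤ a} := by
  have hset : {ω | Finset.univ.sup (fun i => X i ω) ≤ a} = ⋂ i, X i ⁻¹' Set.Iic a := by
    ext ω
    simp [Finset.sup_le_iff]
  rw [hset, measureReal_def, hX.meas_iInter fun i => ⟨Set.Iic a, measurableSet_Iic, rfl⟩,
    ENNReal.toReal_prod]
  rfl

end Probability

theorem expected_max_geometric_general (q : ℝ) (hq0 : 0 < q) (hq1 : q < 1)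
    (p : ℝ) (hp : p = 1 - q) (n : ℕ)
    {Ω : Type*} [MeasurableSpace Ω] (μ : Measure Ω) [IsProbabilityMeasure μ]
    (X : Fin n → Ω → ℕ) (hmeas : ∀ i, Measurable (X i))
    (hindep : iIndepFun X μ)
    (hdist : ∀ i, ∀ k : ℕ, 1 ≤ k → μ {ω | X i ω = k} = ENNReal.ofReal (p * q ^ (k - 1))) :
    ∫ ω, ((Finset.univ.sup fun i => X i ω : ℕ) : ℝ) ∂μ =
      ∑ k ∈ Finset.Icc 1 n, (n.choose k : ℝ) * (-1) ^ (k - 1) / (1 - q ^ k) := by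
  subst hp
  have hcdf (i : Fin n) (m : ℕ) : μ.real {ω | X i ω ≤ m} = 1 - q ^ m :=
    measureReal_le_eq_of_geometric (hmeas i) hq0.le hq1 (hdist i) m
  have hM : Measurable fun ω => Finset.univ.sup fun i => X i ω := by fun_prop
  refine integral_natCast_eq_of_hasSum hM (hasSum_one_sub_one_sub_pow_pow hq0.le hq1 n)
    fun m => ?_
  rw [probReal_lt_eq_one_sub_probReal_le hM, hindep.measureReal_sup_le, Finset.prod_congr rfl
    fun i _ => hcdf i m, Finset.prod_const, Finset.card_univ, Fintype.card_fin]

/-- The expected maximum of `n` i.i.d. geometric random variables with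
`P(X = k) = p·q^{k-1}` on `{1,2,…}` equals `Σ_{k=1}^n C(n,k)·(-1)^{k-1}/(1-q^k)`. -/
theorem expected_max_geometric (q : ℝ) (hq0 : 0 < q) (hq1 : q < 1)
    (p : ℝ) (hp : p = 1 - q) (n : ℕ) (hn : 1 ≤ n)
    {Ω : Type*} [MeasurableSpace Ω] (μ : Measure Ω) [IsProbabilityMeasure μ]
    (X : Fin n → Ω → ℕ) (hmeas : ∀ i, Measurable (X i))
    (hindep : iIndepFun X μ)
    (hdist : ∀ i, ∀ k : ℕ, 1 ≤ k → μ {ω | X i ω = k} = ENNReal.ofReal (p * q ^ (k - 1))) :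
    ∫ ω, ((Finset.univ.sup fun i => X i ω : ℕ) : ℝ) ∂μ =
      ∑ k ∈ Finset.Icc 1 n, (n.choose k : ℝ) * (-1) ^ (k - 1) / (1 - q ^ k) :=
  expected_max_geometric_general q hq0 hq1 p hp n μ X hmeas hindep hdist
end

section
/- Fix real q with 0 < q < 1 and set p = 1-q, Q = 1/q and L = log Q. Then (1/(pL))·Σ_{l≥1} q^{l+1}/(Q^l - 1) + (1/p³)·Σ_{l≥1} [ -l·q^{l+1} + (2l-1)·q^{l+2} - (l-1)·q^{l+3} ]/(Q^l - 1) + (1/p²)·Σ_{l≥1} Q^l·[ (l-1)·q^{l+2} - l·q^{l+1} + q² ]/(Q^l - 1)² = (q/(pL))·Σ_{l≥1} 1/(Q^l - 1) - q²/(p²L) + q²(q+1)/p³ - (q/p)·Σ_{l≥1} l·Q^l/(Q^l - 1)². All series occurring converge absolutely. -/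
set_option maxHeartbeats 1000000 in
/-- For `0 < q < 1`, `p = 1-q`, `Q = 1/q`, `L = log Q`:
`(1/(pL)) Σ_{l≥1} q^{l+1}/(Q^l-1)
  + (1/p³) Σ_{l≥1} [-l q^{l+1} + (2l-1) q^{l+2} - (l-1) q^{l+3}]/(Q^l-1)
  + (1/p²) Σ_{l≥1} Q^l [(l-1) q^{l+2} - l q^{l+1} + q²]/(Q^l-1)²
  = (q/(pL)) Σ_{l≥1} 1/(Q^l-1) - q²/(p²L) + q²(q+1)/p³ - (q/p) Σ_{l≥1} l Q^l/(Q^l-1)²`,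
all series converging absolutely. -/
theorem psi_two_one_simplification (q : ℝ) (hq0 : 0 < q) (hq1 : q < 1)
    (p Q L : ℝ) (hp : p = 1 - q) (hQ : Q = 1 / q) (hL : L = Real.log Q) :
    (Summable fun l : ℕ => |q ^ (l + 1 + 1) / (Q ^ (l + 1) - 1)|) ∧
    (Summable fun l : ℕ =>
      |(-(l + 1 : ℝ) * q ^ (l + 1 + 1) + (2 * (l + 1 : ℝ) - 1) * q ^ (l + 1 + 2)
          - ((l + 1 : ℝ) - 1) * q ^ (l + 1 + 3)) / (Q ^ (l + 1) - 1)|) ∧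
    (Summable fun l : ℕ =>
      |Q ^ (l + 1) * (((l + 1 : ℝ) - 1) * q ^ (l + 1 + 2) - (l + 1 : ℝ) * q ^ (l + 1 + 1)
          + q ^ 2) / (Q ^ (l + 1) - 1) ^ 2|) ∧
    (Summable fun l : ℕ => |1 / (Q ^ (l + 1) - 1)|) ∧
    (Summable fun l : ℕ => |(l + 1 : ℝ) * Q ^ (l + 1) / (Q ^ (l + 1) - 1) ^ 2|) ∧
    (1 / (p * L)) * (∑' l : ℕ, q ^ (l + 1 + 1) / (Q ^ (l + 1) - 1))
      + (1 / p ^ 3) * (∑' l : ℕ,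
          (-(l + 1 : ℝ) * q ^ (l + 1 + 1) + (2 * (l + 1 : ℝ) - 1) * q ^ (l + 1 + 2)
            - ((l + 1 : ℝ) - 1) * q ^ (l + 1 + 3)) / (Q ^ (l + 1) - 1))
      + (1 / p ^ 2) * (∑' l : ℕ,
          Q ^ (l + 1) * (((l + 1 : ℝ) - 1) * q ^ (l + 1 + 2) - (l + 1 : ℝ) * q ^ (l + 1 + 1)
            + q ^ 2) / (Q ^ (l + 1) - 1) ^ 2)
    = (q / (p * L)) * (∑' l : ℕ, 1 / (Q ^ (l + 1) - 1)) - q ^ 2 / (p ^ 2 * L)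
        + q ^ 2 * (q + 1) / p ^ 3
        - (q / p) * (∑' l : ℕ, (l + 1 : ℝ) * Q ^ (l + 1) / (Q ^ (l + 1) - 1) ^ 2) := by
  subst hQ
  have hq : q ≠ 0 := ne_of_gt hq0
  have hp0 : (0:ℝ) < 1 - q := by linarith
  have hpne : (1:ℝ) - q ≠ 0 := ne_of_gt hp0
  have hQ1 : (1:ℝ) < 1 / q := by
    rw [lt_div_iff₀ hq0]; linarith
  have hL0 : 0 < L := by rw [hL]; exact Real.log_pos hQ1
  have hLne : L ≠ 0 := ne_of_gt hL0
  have hy0 : ∀ l : ℕ, 0 < q ^ (l + 1) := fun l => pow_pos hq0 _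
  have hy1 : ∀ l : ℕ, q ^ (l + 1) < 1 := fun l => pow_lt_one₀ hq0.le hq1 (Nat.succ_ne_zero l)
  have hyne : ∀ l : ℕ, (1:ℝ) - q ^ (l + 1) ≠ 0 := fun l => ne_of_gt (by linarith [hy1 l])
  have hQp : ∀ l : ℕ, (1 / q) ^ (l + 1) = 1 / q ^ (l + 1) := fun l => by
    rw [div_pow, one_pow]
  have hD : ∀ l : ℕ, (1 / q) ^ (l + 1) - 1 = (1 - q ^ (l + 1)) / q ^ (l + 1) := fun l => by
    rw [hQp]; field_simp
  have hDpos : ∀ l : ℕ, 0 < (1 / q) ^ (l + 1) - 1 := fun l => by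
    rw [hD]; exact div_pos (by linarith [hy1 l]) (hy0 l)
  have hDne : ∀ l : ℕ, (1 / q) ^ (l + 1) - 1 ≠ 0 := fun l => ne_of_gt (hDpos l)
  -- bound on the inverse
  have hyq : ∀ l : ℕ, q ^ (l + 1) ≤ q := fun l => by
    simpa using pow_le_pow_of_le_one hq0.le hq1.le (Nat.one_le_iff_ne_zero.mpr (Nat.succ_ne_zero l))
  have hinv : ∀ l : ℕ, 1 / ((1 / q) ^ (l + 1) - 1) ≤ q ^ (l + 1) / (1 - q) := fun l => by
    rw [hD, one_div_div]
    exact div_le_div_of_nonneg_left (hy0 l).le hp0 (by linarith [hyq l])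
  have hinvpos : ∀ l : ℕ, 0 < 1 / ((1 / q) ^ (l + 1) - 1) := fun l =>
    div_pos one_pos (hDpos l)
  have hQD2 : ∀ l : ℕ, (1 / q) ^ (l + 1) / ((1 / q) ^ (l + 1) - 1) ^ 2
      = q ^ (l + 1) / (1 - q ^ (l + 1)) ^ 2 := fun l => by
    have hyn := hyne l
    have hy0' := (hy0 l).ne'
    rw [hD, hQp, div_pow]
    field_simp
  have hQD2le : ∀ l : ℕ, (1 / q) ^ (l + 1) / ((1 / q) ^ (l + 1) - 1) ^ 2
      ≤ q ^ (l + 1) / (1 - q) ^ 2 := fun l => by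
    rw [hQD2 l]
    exact div_le_div_of_nonneg_left (hy0 l).le (by positivity)
      (by nlinarith [hyq l, hy1 l])
  have hQD2pos : ∀ l : ℕ, 0 < (1 / q) ^ (l + 1) / ((1 / q) ^ (l + 1) - 1) ^ 2 := fun l => by
    have := hDpos l
    positivity
  -- summable comparison series
  have hgeo : Summable fun l : ℕ => q ^ l := summable_geometric_of_lt_one hq0.le hq1
  have hgeo1 : Summable fun l : ℕ => q ^ (l + 1) := by
    have := hgeo.mul_left q
    simpa [mul_comm, pow_succ] using this
  have hlq : Summable fun l : ℕ => (l : ℝ) * q ^ l := by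
    have h := summable_pow_mul_geometric_of_norm_lt_one (R := ℝ) 1
      (by rw [Real.norm_eq_abs, abs_of_pos hq0]; exact hq1)
    simpa using h
  have hB : Summable fun l : ℕ => ((l : ℝ) + 1) * q ^ (l + 1) := by
    have h := hlq.comp_injective (add_left_injective 1)
    have : ((fun l : ℕ => (l : ℝ) * q ^ l) ∘ fun l : ℕ => l + 1)
        = fun l : ℕ => ((l : ℝ) + 1) * q ^ (l + 1) := by
      funext l; simp only [Function.comp]; push_cast; ring
    rwa [this] at h
  -- summability of each of the five series (absolute values)
  have hS1 : Summable fun l : ℕ => |q ^ (l + 1 + 1) / ((1 / q) ^ (l + 1) - 1)| := by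
    apply Summable.of_nonneg_of_le (fun l => abs_nonneg _) _ (hgeo1.mul_left (1 / (1 - q)))
    intro l
    rw [abs_of_pos (div_pos (pow_pos hq0 _) (hDpos l)), div_eq_mul_one_div]
    calc q ^ (l + 1 + 1) * (1 / ((1 / q) ^ (l + 1) - 1))
        ≤ 1 * (q ^ (l + 1) / (1 - q)) := by
          apply mul_le_mul (pow_le_one₀ hq0.le hq1.le) (hinv l) (hinvpos l).le one_pos.le
      _ = 1 / (1 - q) * q ^ (l + 1) := by ring
  have hS2 : Summable fun l : ℕ =>
      |(-(l + 1 : ℝ) * q ^ (l + 1 + 1) + (2 * (l + 1 : ℝ) - 1) * q ^ (l + 1 + 2)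
          - ((l + 1 : ℝ) - 1) * q ^ (l + 1 + 3)) / ((1 / q) ^ (l + 1) - 1)| := by
    apply Summable.of_nonneg_of_le (fun l => abs_nonneg _) _ (hB.mul_left (4 / (1 - q)))
    intro l
    rw [abs_div, abs_of_pos (hDpos l), div_eq_mul_one_div]
    have hnum : |(-(l + 1 : ℝ) * q ^ (l + 1 + 1) + (2 * (l + 1 : ℝ) - 1) * q ^ (l + 1 + 2)
        - ((l + 1 : ℝ) - 1) * q ^ (l + 1 + 3))| ≤ 4 * ((l : ℝ) + 1) := by
      have ha0 : 0 < q ^ (l + 1 + 1) := pow_pos hq0 _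
      have hb0 : 0 < q ^ (l + 1 + 2) := pow_pos hq0 _
      have hc0 : 0 < q ^ (l + 1 + 3) := pow_pos hq0 _
      have ha1 : q ^ (l + 1 + 1) ≤ 1 := pow_le_one₀ hq0.le hq1.le
      have hb1 : q ^ (l + 1 + 2) ≤ 1 := pow_le_one₀ hq0.le hq1.le
      have hc1 : q ^ (l + 1 + 3) ≤ 1 := pow_le_one₀ hq0.le hq1.le
      have hn1 : (1:ℝ) ≤ (l : ℝ) + 1 := by linarith [Nat.cast_nonneg (α := ℝ) l]
      rw [abs_le]
      constructor <;> nlinarith [mul_le_of_le_one_right (by positivity : (0:ℝ) ≤ (l:ℝ)+1) ha1,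
        mul_le_of_le_one_right (by have := Nat.cast_nonneg (α := ℝ) l; linarith : (0:ℝ) ≤ 2*((l:ℝ)+1)-1) hb1,
        mul_le_of_le_one_right (by positivity : (0:ℝ) ≤ (l:ℝ)) hc1,
        mul_pos (by positivity : (0:ℝ) < (l:ℝ)+1) ha0,
        mul_nonneg (by positivity : (0:ℝ) ≤ (l:ℝ)) hc0.le,
        mul_nonneg (by have := Nat.cast_nonneg (α := ℝ) l; linarith : (0:ℝ) ≤ 2*((l:ℝ)+1)-1) hb0.le]
    calc |(-(l + 1 : ℝ) * q ^ (l + 1 + 1) + (2 * (l + 1 : ℝ) - 1) * q ^ (l + 1 + 2)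
        - ((l + 1 : ℝ) - 1) * q ^ (l + 1 + 3))| * (1 / ((1 / q) ^ (l + 1) - 1))
        ≤ (4 * ((l : ℝ) + 1)) * (q ^ (l + 1) / (1 - q)) :=
          mul_le_mul hnum (hinv l) (hinvpos l).le (by positivity)
      _ = 4 / (1 - q) * (((l : ℝ) + 1) * q ^ (l + 1)) := by ring
  have hS3 : Summable fun l : ℕ =>
      |(1 / q) ^ (l + 1) * (((l + 1 : ℝ) - 1) * q ^ (l + 1 + 2) - (l + 1 : ℝ) * q ^ (l + 1 + 1)
          + q ^ 2) / ((1 / q) ^ (l + 1) - 1) ^ 2| := by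
    apply Summable.of_nonneg_of_le (fun l => abs_nonneg _) _ (hB.mul_left (3 / (1 - q) ^ 2))
    intro l
    have hrw : (1 / q) ^ (l + 1) * (((l + 1 : ℝ) - 1) * q ^ (l + 1 + 2) - (l + 1 : ℝ) * q ^ (l + 1 + 1)
          + q ^ 2) / ((1 / q) ^ (l + 1) - 1) ^ 2
        = (((l + 1 : ℝ) - 1) * q ^ (l + 1 + 2) - (l + 1 : ℝ) * q ^ (l + 1 + 1) + q ^ 2)
          * ((1 / q) ^ (l + 1) / ((1 / q) ^ (l + 1) - 1) ^ 2) := by ring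
    rw [hrw, abs_mul, abs_of_pos (hQD2pos l)]
    have hnum : |(((l + 1 : ℝ) - 1) * q ^ (l + 1 + 2) - (l + 1 : ℝ) * q ^ (l + 1 + 1) + q ^ 2)|
        ≤ 3 * ((l : ℝ) + 1) := by
      have ha0 : 0 < q ^ (l + 1 + 2) := pow_pos hq0 _
      have hb0 : 0 < q ^ (l + 1 + 1) := pow_pos hq0 _
      have hc0 : 0 < q ^ 2 := pow_pos hq0 _
      have ha1 : q ^ (l + 1 + 2) ≤ 1 := pow_le_one₀ hq0.le hq1.le
      have hb1 : q ^ (l + 1 + 1) ≤ 1 := pow_le_one₀ hq0.le hq1.le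
      have hc1 : q ^ 2 ≤ 1 := pow_le_one₀ hq0.le hq1.le
      rw [abs_le]
      constructor <;> nlinarith [mul_le_of_le_one_right (by positivity : (0:ℝ) ≤ (l:ℝ)) ha1,
        mul_le_of_le_one_right (by positivity : (0:ℝ) ≤ (l:ℝ)+1) hb1,
        mul_nonneg (by positivity : (0:ℝ) ≤ (l:ℝ)) ha0.le,
        mul_nonneg (by positivity : (0:ℝ) ≤ (l:ℝ)+1) hb0.le]
    calc |(((l + 1 : ℝ) - 1) * q ^ (l + 1 + 2) - (l + 1 : ℝ) * q ^ (l + 1 + 1) + q ^ 2)|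
          * ((1 / q) ^ (l + 1) / ((1 / q) ^ (l + 1) - 1) ^ 2)
        ≤ (3 * ((l : ℝ) + 1)) * (q ^ (l + 1) / (1 - q) ^ 2) :=
          mul_le_mul hnum (hQD2le l) (hQD2pos l).le (by positivity)
      _ = 3 / (1 - q) ^ 2 * (((l : ℝ) + 1) * q ^ (l + 1)) := by ring
  have hS4 : Summable fun l : ℕ => |1 / ((1 / q) ^ (l + 1) - 1)| := by
    apply Summable.of_nonneg_of_le (fun l => abs_nonneg _) _ (hgeo1.mul_left (1 / (1 - q)))
    intro l
    rw [abs_of_pos (hinvpos l)]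
    calc 1 / ((1 / q) ^ (l + 1) - 1) ≤ q ^ (l + 1) / (1 - q) := hinv l
      _ = 1 / (1 - q) * q ^ (l + 1) := by ring
  have hS5 : Summable fun l : ℕ => |(l + 1 : ℝ) * (1 / q) ^ (l + 1) / ((1 / q) ^ (l + 1) - 1) ^ 2| := by
    apply Summable.of_nonneg_of_le (fun l => abs_nonneg _) _ (hB.mul_left (1 / (1 - q) ^ 2))
    intro l
    have hrw : (l + 1 : ℝ) * (1 / q) ^ (l + 1) / ((1 / q) ^ (l + 1) - 1) ^ 2
        = ((l : ℝ) + 1) * ((1 / q) ^ (l + 1) / ((1 / q) ^ (l + 1) - 1) ^ 2) := by ring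
    rw [hrw, abs_of_pos (mul_pos (by positivity) (hQD2pos l))]
    calc ((l : ℝ) + 1) * ((1 / q) ^ (l + 1) / ((1 / q) ^ (l + 1) - 1) ^ 2)
        ≤ ((l : ℝ) + 1) * (q ^ (l + 1) / (1 - q) ^ 2) := by
          exact mul_le_mul_of_nonneg_left (hQD2le l) (by positivity)
      _ = 1 / (1 - q) ^ 2 * (((l : ℝ) + 1) * q ^ (l + 1)) := by ring
  -- summability without absolute values
  have sf1 := summable_abs_iff.mp hS1
  have sf2 := summable_abs_iff.mp hS2
  have sf3 := summable_abs_iff.mp hS3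
  have sg1 := summable_abs_iff.mp hS4
  have sg2 := summable_abs_iff.mp hS5
  refine ⟨hS1, hS2, hS3, hS4, hS5, ?_⟩
  -- closed forms for auxiliary geometric-type sums
  have tgeom2 : ∑' l : ℕ, q ^ (l + 2) = q ^ 2 / (1 - q) := by
    have h : ∀ l : ℕ, q ^ (l + 2) = q ^ 2 * q ^ l := fun l => by ring
    rw [tsum_congr h, tsum_mul_left, tsum_geometric_of_lt_one hq0.le hq1]
    rw [div_eq_mul_inv]
  have hnorm : ‖q‖ < 1 := by rw [Real.norm_eq_abs, abs_of_pos hq0]; exact hq1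
  have tlin : ∑' l : ℕ, q ^ (l + 2) * ((l + 1 : ℝ) - (l : ℝ) * q)
      = q ^ 2 * (1 + q) / (1 - q) := by
    have h : ∀ l : ℕ, q ^ (l + 2) * ((l + 1 : ℝ) - (l : ℝ) * q)
        = (q ^ 2 - q ^ 3) * ((l : ℝ) * q ^ l) + q ^ 2 * q ^ l := fun l => by ring
    rw [tsum_congr h, Summable.tsum_add (hlq.mul_left _) (hgeo.mul_left _), tsum_mul_left,
      tsum_mul_left, tsum_coe_mul_geometric_of_norm_lt_one hnorm,
      tsum_geometric_of_lt_one hq0.le hq1]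
    field_simp
    ring
  -- key pointwise identity 1
  have key1 : ∀ l : ℕ, q * (1 / ((1 / q) ^ (l + 1) - 1))
      - q ^ (l + 1 + 1) / ((1 / q) ^ (l + 1) - 1) = q ^ (l + 2) := by
    intro l
    rw [hD l]
    have h1 : q ^ (l + 1 + 1) = q ^ (l + 1) * q := by ring
    field_simp [hyne l]
    ring
  have E1 : q * (∑' l : ℕ, 1 / ((1 / q) ^ (l + 1) - 1))
      - (∑' l : ℕ, q ^ (l + 1 + 1) / ((1 / q) ^ (l + 1) - 1)) = q ^ 2 / (1 - q) := by
    rw [← tsum_mul_left, ← Summable.tsum_sub (sg1.mul_left q) sf1, tsum_congr key1, tgeom2]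
  -- key pointwise identity 2
  have key2 : ∀ l : ℕ,
      (1 / (1 - q) ^ 3) * ((-(l + 1 : ℝ) * q ^ (l + 1 + 1) + (2 * (l + 1 : ℝ) - 1) * q ^ (l + 1 + 2)
          - ((l + 1 : ℝ) - 1) * q ^ (l + 1 + 3)) / ((1 / q) ^ (l + 1) - 1))
      + (1 / (1 - q) ^ 2) * ((1 / q) ^ (l + 1) * (((l + 1 : ℝ) - 1) * q ^ (l + 1 + 2)
          - (l + 1 : ℝ) * q ^ (l + 1 + 1) + q ^ 2) / ((1 / q) ^ (l + 1) - 1) ^ 2)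
      + (q / (1 - q)) * ((l + 1 : ℝ) * (1 / q) ^ (l + 1) / ((1 / q) ^ (l + 1) - 1) ^ 2)
      = (1 / (1 - q) ^ 2) * (q ^ (l + 2) * ((l + 1 : ℝ) - (l : ℝ) * q)) := by
    intro l
    have e1 : q ^ (l + 1 + 1) = q ^ (l + 1) * q := by ring
    have e2 : q ^ (l + 1 + 2) = q ^ (l + 1) * q ^ 2 := by ring
    have e3 : q ^ (l + 1 + 3) = q ^ (l + 1) * q ^ 3 := by ring
    rw [hD l, hQp l, e1, e2, e3]
    have hyn := hyne l
    have hy0' := (hy0 l).ne'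
    generalize q ^ (l + 1) = y at hyn hy0' ⊢
    field_simp [hyn, hy0']
    ring
  have E2 : (1 / (1 - q) ^ 3) * (∑' l : ℕ,
        (-(l + 1 : ℝ) * q ^ (l + 1 + 1) + (2 * (l + 1 : ℝ) - 1) * q ^ (l + 1 + 2)
          - ((l + 1 : ℝ) - 1) * q ^ (l + 1 + 3)) / ((1 / q) ^ (l + 1) - 1))
      + (1 / (1 - q) ^ 2) * (∑' l : ℕ,
          (1 / q) ^ (l + 1) * (((l + 1 : ℝ) - 1) * q ^ (l + 1 + 2)
            - (l + 1 : ℝ) * q ^ (l + 1 + 1) + q ^ 2) / ((1 / q) ^ (l + 1) - 1) ^ 2)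
      + (q / (1 - q)) * (∑' l : ℕ, (l + 1 : ℝ) * (1 / q) ^ (l + 1) / ((1 / q) ^ (l + 1) - 1) ^ 2)
      = (1 / (1 - q) ^ 2) * (q ^ 2 * (1 + q) / (1 - q)) := by
    rw [← tsum_mul_left, ← tsum_mul_left, ← tsum_mul_left,
      ← Summable.tsum_add (sf2.mul_left _) (sf3.mul_left _),
      ← Summable.tsum_add ((sf2.mul_left _).add (sf3.mul_left _)) (sg2.mul_left _),
      tsum_congr key2, tsum_mul_left, tlin]
  have E1p : q * (∑' l : ℕ, 1 / ((1 / q) ^ (l + 1) - 1))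
      - (∑' l : ℕ, q ^ (l + 1 + 1) / ((1 / q) ^ (l + 1) - 1)) = q ^ 2 / p := by
    rw [hp]; exact E1
  have E2p : (1 / p ^ 3) * (∑' l : ℕ,
        (-(l + 1 : ℝ) * q ^ (l + 1 + 1) + (2 * (l + 1 : ℝ) - 1) * q ^ (l + 1 + 2)
          - ((l + 1 : ℝ) - 1) * q ^ (l + 1 + 3)) / ((1 / q) ^ (l + 1) - 1))
      + (1 / p ^ 2) * (∑' l : ℕ,
          (1 / q) ^ (l + 1) * (((l + 1 : ℝ) - 1) * q ^ (l + 1 + 2)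
            - (l + 1 : ℝ) * q ^ (l + 1 + 1) + q ^ 2) / ((1 / q) ^ (l + 1) - 1) ^ 2)
      + (q / p) * (∑' l : ℕ, (l + 1 : ℝ) * (1 / q) ^ (l + 1) / ((1 / q) ^ (l + 1) - 1) ^ 2)
      = (1 / p ^ 2) * (q ^ 2 * (1 + q) / p) := by
    rw [hp]; exact E2
  linear_combination (-(1 / (p * L))) * E1p + E2p
end

section
/- For real q with 0 < q < 1 set p = 1-q, Q = 1/q, L = log Q, and define A(q) = -(p/(qL))·Σ_{l≥1} 1/(Q^l - 1) + (p/q)·Σ_{l≥1} l·Q^l/(Q^l - 1)² + 1/L - 1/p - q/p. Then lim_{q→1⁻} A(q) = 1/4. -/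
/-!
Write `L = log (1 / q)`, `h x = x / (exp x - 1)` and `g = -h'`. Termwise
`L * l Q^l / (Q^l - 1)^2 - 1 / (Q^l - 1) = g (l L)`, so
`A = (e^L - 1) / L^2 * (L * Σ_{l≥1} g (l L)) + 1 / L - coth (L / 2)`.
The function `g` is convex on `(0, ∞)` and its antiderivative `-h` vanishes at infinity, so the
midpoint and trapezoid rules squeeze the Riemann sum `L * Σ_{l≥1} g (l L)` between
`h L + L / 2 * g L` and `h (L / 2)`. The resulting bounds on `A` are elementary functions of `L`
that both tend to `1 / 4` as `L → 0⁺`.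
-/

open Filter Real Set Topology

lemma nonneg_of_hasDerivAt_of_nonneg {f f' : ℝ → ℝ} (hf : ∀ x, HasDerivAt f (f' x) x)
    (hf' : ∀ x, 0 ≤ x → 0 ≤ f' x) (h0 : f 0 = 0) {x : ℝ} (hx : 0 ≤ x) : 0 ≤ f x := by
  have hmono : MonotoneOn f (Ici 0) :=
    monotoneOn_of_hasDerivWithinAt_nonneg (convex_Ici 0)
      (fun y _ => (hf y).continuousAt.continuousWithinAt) (fun y _ => (hf y).hasDerivWithinAt)
      (fun y hy => hf' y (interior_subset hy))
  simpa [h0] using hmono self_mem_Ici hx hx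

theorem ConvexOn.midpoint_rule_le_sub {F f : ℝ → ℝ} {m r : ℝ}
    (hf : ConvexOn ℝ (Icc (m - r) (m + r)) f) (hr : 0 ≤ r)
    (hF : ∀ x ∈ Icc (m - r) (m + r), HasDerivAt F (f x) x) :
    2 * r * f m ≤ F (m + r) - F (m - r) := by
  have hmem : ∀ t ∈ Icc 0 r, m - t ∈ Icc (m - r) (m + r) ∧ m + t ∈ Icc (m - r) (m + r) :=
    fun t ⟨ht0, htr⟩ => ⟨⟨by linarith, by linarith⟩, ⟨by linarith, by linarith⟩⟩
  have hφ : ∀ t ∈ Icc 0 r, HasDerivAt (fun t => F (m + t) - F (m - t) - 2 * t * f m)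
      (f (m + t) + f (m - t) - 2 * f m) t := fun t ht => by
    have hplus := (hF _ (hmem t ht).2).comp t ((hasDerivAt_id t).const_add m)
    have hminus := (hF _ (hmem t ht).1).comp t ((hasDerivAt_id t).const_sub m)
    exact ((hplus.sub hminus).sub (((hasDerivAt_id t).const_mul 2).mul_const (f m))).congr_deriv
      (by ring)
  have hmono : MonotoneOn (fun t => F (m + t) - F (m - t) - 2 * t * f m) (Icc 0 r) := by
    refine monotoneOn_of_hasDerivWithinAt_nonneg (convex_Icc 0 r)
      (fun t ht => (hφ t ht).continuousAt.continuousWithinAt)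
      (fun t ht => (hφ t (interior_subset ht)).hasDerivWithinAt) (fun t ht => ?_)
    obtain ⟨hminus, hplus⟩ := hmem t (interior_subset ht)
    have := hf.2 hminus hplus (by norm_num : (0 : ℝ) ≤ 1 / 2)
      (by norm_num : (0 : ℝ) ≤ 1 / 2) (by norm_num)
    simp only [smul_eq_mul] at this
    rw [show 1 / 2 * (m - t) + 1 / 2 * (m + t) = m by ring] at this
    linarith
  have := hmono (left_mem_Icc.2 hr) (right_mem_Icc.2 hr) hr
  simp only [add_zero, sub_zero, mul_zero, zero_mul, sub_self] at this
  linarith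

theorem ConvexOn.sub_le_trapezoid_rule {F f : ℝ → ℝ} {a b : ℝ}
    (hf : ConvexOn ℝ (Icc a b) f) (hab : a < b) (hF : ∀ x ∈ Icc a b, HasDerivAt F (f x) x) :
    F b - F a ≤ (b - a) * (f a + f b) / 2 := by
  -- compare `F` with the antiderivative of the chord of `f` over `[a, b]`
  set ψ := fun x => (b - a) * F x - (b - a) * f a * (x - a) - (f b - f a) * (x - a) ^ 2 / 2
  have hψ : ∀ x ∈ Icc a b,
      HasDerivAt ψ ((b - a) * f x - (b - a) * f a - (f b - f a) * (x - a)) x := fun x hx => by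
    have hsq := ((hasDerivAt_id x).sub_const a).pow 2
    refine (((hF x hx).const_mul (b - a)).sub (((hasDerivAt_id x).sub_const a).const_mul
      ((b - a) * f a))).sub ((hsq.const_mul (f b - f a)).div_const 2) |>.congr_deriv ?_
    simp only [id]
    ring
  have hanti : AntitoneOn ψ (Icc a b) := by
    refine antitoneOn_of_hasDerivWithinAt_nonpos (convex_Icc a b)
      (fun x hx => (hψ x hx).continuousAt.continuousWithinAt)
      (fun x hx => (hψ x (interior_subset hx)).hasDerivWithinAt) (fun x hx => ?_)
    rw [interior_Icc] at hx
    linarith [hf.secant_mono_aux1 (left_mem_Icc.2 hab.le) (right_mem_Icc.2 hab.le) hx.1 hx.2]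
  have := hanti (left_mem_Icc.2 hab.le) (right_mem_Icc.2 hab.le) hab.le
  have hba : 0 < b - a := sub_pos.2 hab
  refine le_of_mul_le_mul_left ?_ hba
  simp only [ψ] at this
  linarith

lemma hasSum_succ_sub_of_tendsto {u : ℕ → ℝ} {c : ℝ} (hu : ∀ n, u n ≤ u (n + 1))
    (hlim : Tendsto u atTop (𝓝 c)) : HasSum (fun n => u (n + 1) - u n) (c - u 0) := by
  rw [hasSum_iff_tendsto_nat_of_nonneg (fun n => sub_nonneg.2 (hu n))]
  simp_rw [Finset.sum_range_sub]
  exact hlim.sub_const _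

section RiemannSum

variable {F f : ℝ → ℝ} {c L : ℝ}

lemma mul_le_sub_of_convexOn_Ioi (hF : ∀ x, 0 < x → HasDerivAt F (f x) x)
    (hf : ConvexOn ℝ (Ioi 0) f) (hL : 0 < L) (n : ℕ) :
    L * f ((n + 1) * L) ≤ F ((n + 1 : ℕ) * L + L / 2) - F (n * L + L / 2) := by
  have hsub : Icc ((n + 1) * L - L / 2) ((n + 1) * L + L / 2) ⊆ Ioi 0 :=
    fun x hx => lt_of_lt_of_le (by nlinarith [(n.cast_nonneg : (0 : ℝ) ≤ n)]) hx.1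
  have h := (hf.subset hsub (convex_Icc _ _)).midpoint_rule_le_sub (half_pos hL).le
    (fun x hx => hF x (hsub hx))
  push_cast
  convert h using 3 <;> ring

lemma sub_le_mul_add_of_convexOn_Ioi (hF : ∀ x, 0 < x → HasDerivAt F (f x) x)
    (hf : ConvexOn ℝ (Ioi 0) f) (hL : 0 < L) (n : ℕ) :
    F ((n + 1 + 1 : ℕ) * L) - F ((n + 1 : ℕ) * L) ≤
      L * (f ((n + 1) * L) + f ((n + 1 + 1 : ℕ) * L)) / 2 := by
  have hsub : Icc ((n + 1 : ℕ) * L) ((n + 1 + 1 : ℕ) * L) ⊆ Ioi 0 :=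
    fun x hx => lt_of_lt_of_le (by positivity) hx.1
  have h := (hf.subset hsub (convex_Icc _ _)).sub_le_trapezoid_rule (by push_cast; linarith)
    (fun x hx => hF x (hsub hx))
  push_cast at h ⊢
  convert h using 2; ring

theorem summable_and_mul_tsum_le_of_convexOn_Ioi (hF : ∀ x, 0 < x → HasDerivAt F (f x) x)
    (hf : ConvexOn ℝ (Ioi 0) f) (hf₀ : ∀ x, 0 < x → 0 ≤ f x)
    (hlim : Tendsto F atTop (𝓝 c)) (hL : 0 < L) :
    Summable (fun n : ℕ => f ((n + 1) * L)) ∧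
      L * ∑' n : ℕ, f ((n + 1) * L) ≤ c - F (L / 2) := by
  have hstep := mul_le_sub_of_convexOn_Ioi hF hf hL
  have hterm : ∀ n : ℕ, 0 ≤ L * f ((n + 1) * L) := fun n =>
    mul_nonneg hL.le (hf₀ _ (by positivity))
  have htel : HasSum (fun n : ℕ => F ((n + 1 : ℕ) * L + L / 2) - F (n * L + L / 2))
      (c - F ((0 : ℕ) * L + L / 2)) :=
    hasSum_succ_sub_of_tendsto (u := fun n : ℕ => F (n * L + L / 2))
      (fun n => by linarith [hstep n, hterm n])
      (hlim.comp (tendsto_atTop_add_const_right _ _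
        (tendsto_natCast_atTop_atTop.atTop_mul_const hL)))
  have hs : Summable (fun n : ℕ => L * f ((n + 1) * L)) :=
    htel.summable.of_nonneg_of_le hterm hstep
  refine ⟨(summable_mul_left_iff hL.ne').1 hs, ?_⟩
  rw [← tsum_mul_left]
  simpa using hasSum_le hstep hs.hasSum htel

theorem le_mul_tsum_of_convexOn_Ioi (hF : ∀ x, 0 < x → HasDerivAt F (f x) x)
    (hf : ConvexOn ℝ (Ioi 0) f) (hf₀ : ∀ x, 0 < x → 0 ≤ f x)
    (hlim : Tendsto F atTop (𝓝 c)) (hL : 0 < L) :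
    c - F L + L / 2 * f L ≤ L * ∑' n : ℕ, f ((n + 1) * L) := by
  have hs := (summable_and_mul_tsum_le_of_convexOn_Ioi hF hf hf₀ hlim hL).1
  have hmono : MonotoneOn F (Ioi 0) :=
    monotoneOn_of_hasDerivWithinAt_nonneg (convex_Ioi 0)
      (fun x hx => (hF x hx).continuousAt.continuousWithinAt)
      (fun x hx => (hF x (interior_subset hx)).hasDerivWithinAt)
      (fun x hx => hf₀ x (interior_subset hx))
  have htel : HasSum (fun n : ℕ => F ((n + 1 + 1 : ℕ) * L) - F ((n + 1 : ℕ) * L))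
      (c - F ((0 + 1 : ℕ) * L)) :=
    hasSum_succ_sub_of_tendsto (u := fun n : ℕ => F ((n + 1 : ℕ) * L))
      (fun n => hmono (by simp only [mem_Ioi]; positivity) (by simp only [mem_Ioi]; positivity)
        (by gcongr; simp))
      (hlim.comp ((tendsto_natCast_atTop_atTop.comp (tendsto_add_atTop_nat 1)).atTop_mul_const hL))
  have hshift : HasSum (fun n : ℕ => f ((n + 1 + 1 : ℕ) * L))
      (∑' n : ℕ, f ((n + 1) * L) - f L) := by
    simpa using (hasSum_nat_add_iff' 1).2 hs.hasSum
  have := hasSum_le (sub_le_mul_add_of_convexOn_Ioi hF hf hL) htel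
    (((hs.hasSum.add hshift).mul_left L).div_const 2)
  simp only [zero_add, Nat.cast_one, one_mul] at this
  linarith

end RiemannSum

noncomputable def planck (x : ℝ) : ℝ := x / (exp x - 1)

noncomputable def planckNegDeriv (x : ℝ) : ℝ := x * exp x / (exp x - 1) ^ 2 - 1 / (exp x - 1)

lemma exp_sub_one_ne_zero {x : ℝ} (hx : x ≠ 0) : exp x - 1 ≠ 0 :=
  sub_ne_zero.2 fun h => hx (exp_eq_one_iff x |>.1 h)

lemma exp_sub_one_le_mul_exp (x : ℝ) : exp x - 1 ≤ x * exp x := by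
  have h := mul_le_mul_of_nonneg_right (add_one_le_exp (-x)) (exp_pos x).le
  rw [← exp_add, neg_add_cancel, exp_zero] at h
  linarith

lemma two_mul_exp_sub_one_le {x : ℝ} (hx : 0 ≤ x) : 2 * (exp x - 1) ≤ x * (exp x + 1) := by
  have h := nonneg_of_hasDerivAt_of_nonneg (f := fun x => x * (exp x + 1) - 2 * (exp x - 1))
    (fun x => (((hasDerivAt_id x).mul ((hasDerivAt_exp x).add_const 1)).sub
      (((hasDerivAt_exp x).sub_const 1).const_mul 2)))
    (fun x _ => by simp only [id]; linarith [exp_sub_one_le_mul_exp x]) (by simp) hx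
  linarith

lemma three_mul_exp_sq_sub_one_le {x : ℝ} (hx : 0 ≤ x) :
    3 * (exp x ^ 2 - 1) ≤ x * (exp x ^ 2 + 4 * exp x + 1) := by
  have hE := hasDerivAt_exp
  have hE2 : ∀ x, HasDerivAt (fun x => exp x ^ 2) (2 * exp x * exp x) x := fun x =>
    ((hE x).pow 2).congr_deriv (by ring)
  -- its derivative is `4 * exp y * (y * (exp y + 1) - 2 * (exp y - 1))`
  have hderiv : ∀ y, 0 ≤ y →
      0 ≤ (exp y ^ 2 + 4 * exp y + 1) + y * (2 * exp y ^ 2 + 4 * exp y) - 6 * exp y ^ 2 :=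
    fun y hy => nonneg_of_hasDerivAt_of_nonneg
      (fun x => ((((hE2 x).add ((hE x).const_mul 4)).add_const 1).add ((hasDerivAt_id x).mul
        (((hE2 x).const_mul 2).add ((hE x).const_mul 4)))).sub ((hE2 x).const_mul 6))
      (fun x hx => by
        have := two_mul_exp_sub_one_le hx
        simp only [id, Pi.add_apply]
        nlinarith [exp_pos x])
      (by norm_num) hy
  have h := nonneg_of_hasDerivAt_of_nonneg
    (f := fun x => x * (exp x ^ 2 + 4 * exp x + 1) - 3 * (exp x ^ 2 - 1))
    (fun x => ((hasDerivAt_id x).mul (((hE2 x).add ((hE x).const_mul 4)).add_const 1)).sub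
      (((hE2 x).sub_const 1).const_mul 3))
    (fun x hx => by simp only [id, Pi.add_apply]; linarith [hderiv x hx]) (by simp) hx
  linarith

lemma hasDerivAt_planck {x : ℝ} (hx : x ≠ 0) : HasDerivAt planck (-planckNegDeriv x) x := by
  have hD := exp_sub_one_ne_zero hx
  refine ((hasDerivAt_id x).div ((hasDerivAt_exp x).sub_const 1) hD).congr_deriv ?_
  simp only [planckNegDeriv, id]
  field_simp
  ring

lemma planckNegDeriv_nonneg (x : ℝ) : 0 ≤ planckNegDeriv x := by
  rcases eq_or_ne x 0 with rfl | hx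
  · simp [planckNegDeriv]
  have hD := exp_sub_one_ne_zero hx
  have : planckNegDeriv x = (x * exp x - (exp x - 1)) / (exp x - 1) ^ 2 := by
    rw [planckNegDeriv]
    field_simp
  rw [this]
  exact div_nonneg (by linarith [exp_sub_one_le_mul_exp x]) (sq_nonneg _)

lemma convexOn_planckNegDeriv : ConvexOn ℝ (Ioi 0) planckNegDeriv := by
  have hE := hasDerivAt_exp
  have hD : ∀ x ∈ Ioi (0 : ℝ), 0 < exp x - 1 := fun x (hx : 0 < x) => by
    linarith [add_one_lt_exp hx.ne']
  have h' : ∀ x ∈ Ioi (0 : ℝ), HasDerivAt planckNegDeriv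
      (exp x * (2 * (exp x - 1) - x * (exp x + 1)) / (exp x - 1) ^ 3) x := fun x hx => by
    have hD := (hD x hx).ne'
    refine ((((hasDerivAt_id x).mul (hE x)).div (((hE x).sub_const 1).pow 2) (pow_ne_zero 2 hD)).sub
      ((hasDerivAt_const x 1).div ((hE x).sub_const 1) hD)).congr_deriv ?_
    simp only [id, Pi.pow_apply, Pi.mul_apply]
    field_simp
    ring
  have h'' : ∀ x ∈ Ioi (0 : ℝ),
      HasDerivAt (fun x => exp x * (2 * (exp x - 1) - x * (exp x + 1)) / (exp x - 1) ^ 3)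
        (exp x * (x * (exp x ^ 2 + 4 * exp x + 1) - 3 * (exp x ^ 2 - 1)) / (exp x - 1) ^ 4) x :=
    fun x hx => by
    have hD := (hD x hx).ne'
    refine (((hE x).mul ((((hE x).sub_const 1).const_mul 2).sub
      ((hasDerivAt_id x).mul ((hE x).add_const 1)))).div (((hE x).sub_const 1).pow 3)
      (pow_ne_zero 3 hD)).congr_deriv ?_
    simp only [id, Pi.pow_apply, Pi.mul_apply, Pi.sub_apply]
    field_simp
    ring
  rw [← interior_Ioi] at h' h''
  refine convexOn_of_hasDerivWithinAt2_nonneg (convex_Ioi 0)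
    (fun x hx => (h' x (by rwa [interior_Ioi])).continuousAt.continuousWithinAt)
    (fun x hx => (h' x hx).hasDerivWithinAt) (fun x hx => (h'' x hx).hasDerivWithinAt)
    (fun x hx => ?_)
  rw [interior_Ioi] at hx
  have := three_mul_exp_sq_sub_one_le (le_of_lt hx)
  have := hD x hx
  exact div_nonneg (mul_nonneg (exp_pos x).le (by linarith)) (by positivity)

lemma tendsto_planck_atTop : Tendsto planck atTop (𝓝 0) := by
  have h := (tendsto_pow_mul_exp_neg_atTop_nhds_zero 1).div
    (tendsto_exp_neg_atTop_nhds_zero.const_sub 1) (by norm_num)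
  rw [sub_zero, zero_div] at h
  refine h.congr' (eventually_gt_atTop 0 |>.mono fun x hx => ?_)
  have hD := exp_sub_one_ne_zero hx.ne'
  rw [Pi.div_apply, planck, exp_neg, pow_one]
  field_simp

noncomputable def planckSum (L : ℝ) : ℝ := ∑' n : ℕ, planckNegDeriv ((n + 1) * L)

section planckSum

variable {L : ℝ}

lemma hasDerivAt_neg_planck {x : ℝ} (hx : 0 < x) :
    HasDerivAt (fun y => -planck y) (planckNegDeriv x) x :=
  (hasDerivAt_planck hx.ne').neg.congr_deriv (neg_neg _)

lemma tendsto_neg_planck_atTop : Tendsto (fun y => -planck y) atTop (𝓝 0) := by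
  simpa using tendsto_planck_atTop.neg

lemma summable_planckNegDeriv_nat_mul (hL : 0 < L) :
    Summable fun n : ℕ => planckNegDeriv ((n + 1) * L) :=
  (summable_and_mul_tsum_le_of_convexOn_Ioi (fun _ => hasDerivAt_neg_planck)
    convexOn_planckNegDeriv (fun x _ => planckNegDeriv_nonneg x) tendsto_neg_planck_atTop hL).1

lemma mul_planckSum_le (hL : 0 < L) : L * planckSum L ≤ planck (L / 2) := by
  simpa [planckSum] using (summable_and_mul_tsum_le_of_convexOn_Ioi
    (fun _ => hasDerivAt_neg_planck) convexOn_planckNegDeriv (fun x _ => planckNegDeriv_nonneg x)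
    tendsto_neg_planck_atTop hL).2

lemma le_mul_planckSum (hL : 0 < L) : planck L + L / 2 * planckNegDeriv L ≤ L * planckSum L := by
  simpa [planckSum] using le_mul_tsum_of_convexOn_Ioi (fun _ => hasDerivAt_neg_planck)
    convexOn_planckNegDeriv (fun x _ => planckNegDeriv_nonneg x) tendsto_neg_planck_atTop hL

end planckSum

lemma summable_one_div_pow_succ_sub_one {Q : ℝ} (hQ : 1 < Q) :
    Summable fun n : ℕ => 1 / (Q ^ (n + 1) - 1) := by
  have hQ0 : 0 < Q := by linarith
  refine ((summable_geometric_of_lt_one (by positivity) (inv_lt_one_of_one_lt₀ hQ)).mul_left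
    (Q - 1)⁻¹).of_nonneg_of_le (fun n => ?_) (fun n => ?_)
  · have : 1 < Q ^ (n + 1) := one_lt_pow₀ hQ n.succ_ne_zero
    exact one_div_nonneg.2 (by linarith)
  · -- `(Q - 1) * Q ^ n ≤ Q ^ (n + 1) - 1`
    have h1 : 1 ≤ Q ^ n := one_le_pow₀ hQ.le
    have h2 : 0 < (Q - 1) * Q ^ n := by have := sub_pos.2 hQ; positivity
    rw [inv_pow, ← mul_inv, one_div]
    exact inv_anti₀ h2 (by rw [pow_succ]; nlinarith)

lemma planckSum_log {Q : ℝ} (hQ : 1 < Q) :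
    planckSum (log Q) = log Q * ∑' n : ℕ, (n + 1 : ℝ) * Q ^ (n + 1) / (Q ^ (n + 1) - 1) ^ 2
      - ∑' n : ℕ, 1 / (Q ^ (n + 1) - 1) := by
  have hL : 0 < log Q := log_pos hQ
  have hterm : ∀ n : ℕ, planckNegDeriv ((n + 1) * log Q) =
      log Q * ((n + 1 : ℝ) * Q ^ (n + 1) / (Q ^ (n + 1) - 1) ^ 2) - 1 / (Q ^ (n + 1) - 1) := by
    intro n
    have hexp : exp ((n + 1) * log Q) = Q ^ (n + 1) := by
      rw [← exp_log (pow_pos (by linarith) (n + 1) : 0 < Q ^ (n + 1)), log_pow]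
      push_cast
      ring_nf
    rw [planckNegDeriv, hexp]
    ring
  have hb := summable_one_div_pow_succ_sub_one hQ
  have ha : Summable fun n : ℕ => log Q * ((n + 1 : ℝ) * Q ^ (n + 1) / (Q ^ (n + 1) - 1) ^ 2) :=
    ((summable_planckNegDeriv_nat_mul hL).add hb).congr fun n => by rw [hterm]; ring
  rw [planckSum, tsum_congr hterm, ha.tsum_sub hb, tsum_mul_left]

lemma tendsto_exp_mul_sub_one_div (c : ℝ) :
    Tendsto (fun x => (exp (c * x) - 1) / x) (𝓝[≠] 0) (𝓝 c) := by
  have hd : HasDerivAt (fun x => exp (c * x)) c 0 := by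
    simpa using ((hasDerivAt_id (0 : ℝ)).const_mul c).exp
  refine (hasDerivAt_iff_tendsto_slope.1 hd).congr fun x => ?_
  simp [slope_def_field]

lemma tendsto_exp_sub_one_sub_div_sq :
    Tendsto (fun x => (exp x - 1 - x) / x ^ 2) (𝓝[≠] 0) (𝓝 (1 / 2)) := by
  rw [← tendsto_sub_nhds_zero_iff]
  have habs : Tendsto (fun x : ℝ => 2 / 9 * |x|) (𝓝[≠] 0) (𝓝 0) := by
    simpa using ((continuous_abs.tendsto (0 : ℝ)).const_mul (2 / 9)).mono_left nhdsWithin_le_nhds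
  refine squeeze_zero_norm' ?_ habs
  filter_upwards [self_mem_nhdsWithin,
    nhdsWithin_le_nhds (Icc_mem_nhds (by norm_num : (-1 : ℝ) < 0) (by norm_num : (0 : ℝ) < 1))]
    with x (hx : x ≠ 0) hx1
  have h := exp_bound (abs_le.2 hx1) (by norm_num : 0 < 3)
  norm_num [Finset.sum_range_succ] at h
  have hx2 : 0 < x ^ 2 := by positivity
  rw [Real.norm_eq_abs, show (exp x - 1 - x) / x ^ 2 - 1 / 2 = (exp x - (1 + x + x ^ 2 / 2)) / x ^ 2
    by field_simp; ring, abs_div, abs_of_pos hx2, div_le_iff₀ hx2]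
  calc |exp x - (1 + x + x ^ 2 / 2)| ≤ |x| ^ 3 * (4 / 18) := by convert h using 2; ring
    _ = 2 / 9 * |x| * x ^ 2 := by rw [pow_succ, sq_abs]; ring

lemma tendsto_one_div_sub_one_div_exp_sub_one :
    Tendsto (fun x => 1 / x - 1 / (exp x - 1)) (𝓝[≠] 0) (𝓝 (1 / 2)) := by
  have h := tendsto_exp_sub_one_sub_div_sq.mul ((tendsto_exp_mul_sub_one_div 1).inv₀ one_ne_zero)
  rw [inv_one, mul_one] at h
  refine h.congr' (eventually_mem_nhdsWithin.mono fun x (hx : x ≠ 0) => ?_)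
  have hD := exp_sub_one_ne_zero hx
  rw [one_mul]
  field_simp

/-- The function `A` of the statement, as a function of `L = log (1 / q)`. -/
noncomputable def aOfLog (L : ℝ) : ℝ :=
  (exp L - 1) / L * planckSum L + 1 / L - (exp L + 1) / (exp L - 1)

section aOfLog

variable {L : ℝ}

lemma le_aOfLog (hL : 0 < L) : 3 / 2 * (1 / L - 1 / (exp L - 1)) - 1 / 2 ≤ aOfLog L := by
  have hD : 0 < exp L - 1 := by linarith [add_one_lt_exp hL.ne']
  have key : aOfLog L - (3 / 2 * (1 / L - 1 / (exp L - 1)) - 1 / 2) =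
      (exp L - 1) / L ^ 2 * (L * planckSum L - (planck L + L / 2 * planckNegDeriv L)) := by
    rw [aOfLog, planck, planckNegDeriv]
    field_simp
    ring
  have := mul_nonneg (by positivity : 0 ≤ (exp L - 1) / L ^ 2)
    (sub_nonneg.2 (le_mul_planckSum hL))
  linarith

lemma aOfLog_le (hL : 0 < L) :
    aOfLog L ≤ (exp (1 / 2 * L) - 1) / L / 2 - 1 + 2 * (1 / L - 1 / (exp L - 1)) := by
  have hD : 0 < exp (L / 2) - 1 := by linarith [add_one_lt_exp (half_pos hL).ne']
  have hsq : exp L = exp (L / 2) ^ 2 := by rw [← exp_nat_mul]; ring_nf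
  have hDL : 0 < exp L - 1 := by rw [hsq]; nlinarith
  have key : (exp (1 / 2 * L) - 1) / L / 2 - 1 + 2 * (1 / L - 1 / (exp L - 1)) - aOfLog L =
      (exp L - 1) / L ^ 2 * (planck (L / 2) - L * planckSum L) := by
    rw [aOfLog, planck, one_div_mul_eq_div]
    field_simp
    rw [hsq]
    ring
  have := mul_nonneg (div_nonneg hDL.le (sq_nonneg L))
    (sub_nonneg.2 (mul_planckSum_le hL))
  linarith

lemma tendsto_aOfLog : Tendsto aOfLog (𝓝[>] 0) (𝓝 (1 / 4)) := by
  have hGT : 𝓝[>] (0 : ℝ) ≤ 𝓝[≠] 0 := nhdsWithin_mono _ fun x (hx : 0 < x) => hx.ne'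
  have hK := tendsto_one_div_sub_one_div_exp_sub_one.mono_left hGT
  have hlow : Tendsto (fun L => 3 / 2 * (1 / L - 1 / (exp L - 1)) - 1 / 2) (𝓝[>] 0)
      (𝓝 (1 / 4)) := by
    convert (hK.const_mul (3 / 2)).sub_const (1 / 2) using 2
    norm_num
  have hup : Tendsto (fun L => (exp (1 / 2 * L) - 1) / L / 2 - 1 + 2 * (1 / L - 1 / (exp L - 1)))
      (𝓝[>] 0) (𝓝 (1 / 4)) := by
    convert ((((tendsto_exp_mul_sub_one_div (1 / 2)).mono_left hGT).div_const 2).sub_const 1).add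
      (hK.const_mul 2) using 2
    norm_num
  exact tendsto_of_tendsto_of_tendsto_of_le_of_le' hlow hup
    (eventually_mem_nhdsWithin.mono fun L hL => le_aOfLog hL)
    (eventually_mem_nhdsWithin.mono fun L hL => aOfLog_le hL)

lemma eq_aOfLog {q : ℝ} (hq0 : 0 < q) (hq1 : q < 1) :
    -((1 - q) / (q * log (1 / q))) * (∑' l : ℕ, 1 / ((1 / q) ^ (l + 1) - 1))
      + ((1 - q) / q) *
        (∑' l : ℕ, (l + 1 : ℝ) * (1 / q) ^ (l + 1) / ((1 / q) ^ (l + 1) - 1) ^ 2)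
      + 1 / log (1 / q) - 1 / (1 - q) - q / (1 - q) = aOfLog (log (1 / q)) := by
  have hQ : 1 < 1 / q := one_lt_one_div hq0 hq1
  have hL : 0 < log (1 / q) := log_pos hQ
  rw [aOfLog, planckSum_log hQ, exp_log (by positivity)]
  have h1q : 1 - q ≠ 0 := by linarith
  have h1q' : 1 / q - 1 ≠ 0 := by linarith
  field_simp
  ring

end aOfLog

/-- With `p = 1-q`, `Q = 1/q`, `L = log Q` and
`A(q) = -(p/(qL)) Σ_{l≥1} 1/(Q^l-1) + (p/q) Σ_{l≥1} l Q^l/(Q^l-1)² + 1/L - 1/p - q/p`,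
we have `lim_{q→1⁻} A(q) = 1/4`. -/
theorem limit_A_q_one_quarter
    (A : ℝ → ℝ)
    (hA : ∀ q : ℝ, 0 < q → q < 1 → A q =
      -((1 - q) / (q * Real.log (1 / q))) * (∑' l : ℕ, 1 / ((1 / q) ^ (l + 1) - 1))
        + ((1 - q) / q) * (∑' l : ℕ, (l + 1 : ℝ) * (1 / q) ^ (l + 1) / ((1 / q) ^ (l + 1) - 1) ^ 2)
        + 1 / Real.log (1 / q) - 1 / (1 - q) - q / (1 - q)) :
    Tendsto A (nhdsWithin 1 (Set.Iio 1)) (nhds (1 / 4)) := by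
  have hlog : Tendsto (fun q => log (1 / q)) (𝓝[<] 1) (𝓝[>] 0) := by
    refine tendsto_nhdsWithin_iff.2 ⟨?_, ?_⟩
    · have h : ContinuousAt (fun q : ℝ => log (1 / q)) 1 :=
        (continuousAt_const.div continuousAt_id one_ne_zero).log (by norm_num)
      simpa using h.tendsto.mono_left nhdsWithin_le_nhds
    · filter_upwards [Ioo_mem_nhdsLT one_pos] with q hq
      exact log_pos (one_lt_one_div hq.1 hq.2)
  refine (tendsto_aOfLog.comp hlog).congr' ?_
  filter_upwards [Ioo_mem_nhdsLT one_pos] with q hq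
  rw [hA q hq.1 hq.2, Function.comp_apply, eq_aOfLog hq.1 hq.2]
end

section
/- For every real t > 0, Σ_{l≥1} 1/(e^{tl} - 1) = (1/(2π)) ∫_{-∞}^{∞} ζ(3 + iy)² · Γ(3 + iy) · t^{-(3+iy)} dy, where ζ is the Riemann zeta function, Γ is the complex Gamma function, t^{-(3+iy)} = exp(-(3+iy)·log t), and the left-hand side is viewed as a complex number; the integrand is integrable over y ∈ ℝ. -/
/-!
Expanding each `1 / (e^{tl} - 1)` as a geometric series writes the left-hand side as the double
series `F(t) = Σ_{m,n ≥ 1} e^{-mnt}`, whose Mellin transform is, termwise,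
`Γ(s) Σ (mn)^{-s} = ζ(s)² Γ(s)` for `Re s > 1`. On a line `Re s = σ > 1` we have
`|ζ(s)| ≤ ζ(σ)`, and `Γ(s + 2) = s (s + 1) Γ(s)` gives `|Γ(s)| ≤ Γ(σ + 2) / (1 + (Im s)²)`, so the
transform is integrable along the line and Mellin inversion recovers `F` at every `t > 0`, where
`F` is continuous.
-/

open Complex MeasureTheory

open Real Set Filter

lemma hasSum_exp_neg_mul_succ {x : ℝ} (hx : 0 < x) :
    HasSum (fun n : ℕ => rexp (-(x * (n + 1)))) (1 / (rexp x - 1)) := by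
  have hr : rexp (-x) < 1 := Real.exp_lt_one_iff.mpr (neg_lt_zero.mpr hx)
  have hsum := (hasSum_geometric_of_lt_one (Real.exp_pos _).le hr).mul_left (rexp (-x))
  rw [show 1 / (rexp x - 1) = rexp (-x) * (1 - rexp (-x))⁻¹ by rw [Real.exp_neg]; field_simp]
  refine hsum.congr_fun fun n => ?_
  rw [← Real.exp_nat_mul, ← Real.exp_add]
  ring_nf

/-- The Lambert series `Σ_{l ≥ 1} 1 / (e^{tl} - 1) = Σ_{n ≥ 1} d(n) e^{-nt}` of the divisor
function. -/
noncomputable def lambertSeries (t : ℝ) : ℝ := ∑' l : ℕ, 1 / (rexp (t * (l + 1)) - 1)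

lemma summable_exp_neg_mul_succ_mul_succ {t : ℝ} (ht : 0 < t) :
    Summable fun i : ℕ × ℕ => rexp (-(((i.1 : ℝ) + 1) * ((i.2 : ℝ) + 1)) * t) := by
  have hgeom := (hasSum_exp_neg_mul_succ ht).summable
  refine Summable.of_nonneg_of_le (fun _ => (Real.exp_pos _).le) (fun i => ?_)
    ((hgeom.mul_of_nonneg hgeom (fun _ => (Real.exp_pos _).le)
      (fun _ => (Real.exp_pos _).le)).mul_left (rexp t))
  -- `e^{-mnt} ≤ e^t e^{-mt} e^{-nt}`, as `mn ≥ m + n - 1` for `m, n ≥ 1`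
  rw [← Real.exp_add, ← Real.exp_add, Real.exp_le_exp]
  have : (0 : ℝ) ≤ i.1 * i.2 := by positivity
  nlinarith

theorem hasSum_lambertSeries {t : ℝ} (ht : 0 < t) :
    HasSum (fun i : ℕ × ℕ => rexp (-(((i.1 : ℝ) + 1) * ((i.2 : ℝ) + 1)) * t)) (lambertSeries t) := by
  have hfiber (l : ℕ) : HasSum (fun m : ℕ => rexp (-(((l : ℝ) + 1) * ((m : ℝ) + 1)) * t))
      (1 / (rexp (t * (l + 1)) - 1)) := by
    convert hasSum_exp_neg_mul_succ (by positivity : 0 < t * (l + 1)) using 3 with m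
    ring
  have hsum := (summable_exp_neg_mul_succ_mul_succ ht).hasSum
  rwa [lambertSeries, (hsum.prod_fiberwise hfiber).tsum_eq]

theorem continuousAt_lambertSeries {t : ℝ} (ht : 0 < t) : ContinuousAt lambertSeries t := by
  have hcont : ContinuousOn
      (fun u => ∑' i : ℕ × ℕ, rexp (-(((i.1 : ℝ) + 1) * ((i.2 : ℝ) + 1)) * u)) (Ioi (t / 2)) := by
    refine continuousOn_tsum (fun i => by fun_prop)
      (summable_exp_neg_mul_succ_mul_succ (half_pos ht)) fun i u (hu : t / 2 < u) => ?_
    rw [Real.norm_of_nonneg (Real.exp_pos _).le, Real.exp_le_exp]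
    exact mul_le_mul_of_nonpos_left hu.le (by simp only [neg_nonpos]; positivity)
  refine (hcont.continuousAt (Ioi_mem_nhds (half_lt_self ht))).congr ?_
  filter_upwards [Ioi_mem_nhds ht] with u hu
  exact (hasSum_lambertSeries hu).tsum_eq

lemma norm_one_div_natCast_add_one_cpow (n : ℕ) (s : ℂ) :
    ‖1 / ((n : ℂ) + 1) ^ s‖ = 1 / ((n : ℝ) + 1) ^ s.re := by
  rw [norm_div, norm_one, ← ofReal_natCast, ← ofReal_one, ← ofReal_add,
    norm_cpow_eq_rpow_re_of_pos (by positivity)]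

lemma summable_norm_one_div_natCast_add_one_cpow {s : ℂ} (hs : 1 < s.re) :
    Summable fun n : ℕ => ‖1 / ((n : ℂ) + 1) ^ s‖ := by
  simp only [norm_one_div_natCast_add_one_cpow]
  refine ((Real.summable_one_div_nat_add_rpow 1 s.re).mpr hs).congr fun n => ?_
  rw [abs_of_pos (by positivity)]

lemma hasSum_riemannZeta {s : ℂ} (hs : 1 < s.re) :
    HasSum (fun n : ℕ => 1 / ((n : ℂ) + 1) ^ s) (riemannZeta s) := by
  rw [zeta_eq_tsum_one_div_nat_add_one_cpow hs]
  exact (summable_norm_one_div_natCast_add_one_cpow hs).of_norm.hasSum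

lemma norm_riemannZeta_le {s : ℂ} (hs : 1 < s.re) :
    ‖riemannZeta s‖ ≤ ∑' n : ℕ, 1 / ((n : ℝ) + 1) ^ s.re := by
  rw [zeta_eq_tsum_one_div_nat_add_one_cpow hs]
  refine (norm_tsum_le_tsum_norm (summable_norm_one_div_natCast_add_one_cpow hs)).trans_eq ?_
  simp only [norm_one_div_natCast_add_one_cpow]

theorem mellin_lambertSeries {s : ℂ} (hs : 1 < s.re) :
    mellin (fun t => (lambertSeries t : ℂ)) s = riemannZeta s ^ 2 * Complex.Gamma s := by
  let z (n : ℕ) : ℂ := 1 / ((n : ℂ) + 1) ^ s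
  have hnorm : Summable fun n => ‖z n‖ := summable_norm_one_div_natCast_add_one_cpow hs
  have hp (i : ℕ × ℕ) : (0 : ℝ) < ((i.1 : ℝ) + 1) * ((i.2 : ℝ) + 1) := by positivity
  have hF : ∀ t ∈ Ioi (0 : ℝ), HasSum
      (fun i : ℕ × ℕ => (1 : ℂ) * rexp (-(((i.1 : ℝ) + 1) * ((i.2 : ℝ) + 1)) * t))
      (lambertSeries t : ℂ) := fun t ht => by
    simpa only [one_mul] using hasSum_ofReal.mpr (hasSum_lambertSeries ht)
  have hdirichlet : Summable fun i : ℕ × ℕ =>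
      ‖(1 : ℂ)‖ / (((i.1 : ℝ) + 1) * ((i.2 : ℝ) + 1)) ^ s.re := by
    refine (hnorm.mul_norm hnorm).congr fun i => ?_
    rw [norm_mul, norm_one_div_natCast_add_one_cpow, norm_one_div_natCast_add_one_cpow, norm_one,
      Real.mul_rpow (by positivity) (by positivity), one_div_mul_one_div]
  have hmellin := hasSum_mellin (fun i => Or.inr (hp i)) (zero_lt_one.trans hs) hF hdirichlet
  have hzeta : HasSum (fun i : ℕ × ℕ => Complex.Gamma s * (z i.1 * z i.2))
      (Complex.Gamma s * (riemannZeta s * riemannZeta s)) :=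
    (HasSum.mul (f := z) (g := z) (hasSum_riemannZeta hs) (hasSum_riemannZeta hs)
      (summable_mul_of_summable_norm hnorm hnorm)).mul_left (Complex.Gamma s)
  have hterm (i : ℕ × ℕ) : Complex.Gamma s * 1 / ((((i.1 : ℝ) + 1) * ((i.2 : ℝ) + 1) : ℝ) : ℂ) ^ s =
      Complex.Gamma s * (z i.1 * z i.2) := by
    rw [ofReal_mul, mul_cpow_ofReal_nonneg (by positivity) (by positivity)]
    push_cast
    ring
  rw [hmellin.unique (hzeta.congr_fun hterm)]
  ring

theorem mellinConvergent_lambertSeries {s : ℂ} (hs : 1 < s.re) :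
    MellinConvergent (fun t => (lambertSeries t : ℂ)) s := by
  -- a non-integrable function has Bochner integral `0`, and this Mellin transform is nonzero
  refine Integrable.of_integral_ne_zero ?_
  rw [← mellin, mellin_lambertSeries hs]
  exact mul_ne_zero (pow_ne_zero _ (riemannZeta_ne_zero_of_one_lt_re hs))
    (Gamma_ne_zero_of_re_pos (zero_lt_one.trans hs))

lemma norm_Gamma_le_Gamma_re {s : ℂ} (hs : 0 < s.re) : ‖Complex.Gamma s‖ ≤ Real.Gamma s.re := by
  rw [Complex.Gamma_eq_integral hs, Real.Gamma_eq_integral hs, GammaIntegral]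
  refine (norm_integral_le_integral_norm _).trans_eq (setIntegral_congr_fun measurableSet_Ioi
    fun x (hx : 0 < x) => ?_)
  rw [norm_mul, norm_real, Real.norm_of_nonneg (Real.exp_pos _).le,
    norm_cpow_eq_rpow_re_of_pos hx, sub_re, one_re]

lemma norm_Gamma_le_of_one_le_re {s : ℂ} (hs : 1 ≤ s.re) :
    ‖Complex.Gamma s‖ ≤ Real.Gamma (s.re + 2) / (1 + s.im ^ 2) := by
  have hs0 : s ≠ 0 := fun h => by simp [h] at hs; linarith
  have hs1 : s + 1 ≠ 0 := fun h => by
    have := congrArg re h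
    simp only [add_re, one_re, zero_re] at this
    linarith
  have hrec : Complex.Gamma (s + 2) = (s + 1) * (s * Complex.Gamma s) := by
    rw [show s + 2 = s + 1 + 1 by ring, Complex.Gamma_add_one _ hs1, Complex.Gamma_add_one _ hs0]
  have hGamma : ‖Complex.Gamma (s + 2)‖ ≤ Real.Gamma (s.re + 2) := by
    simpa using norm_Gamma_le_Gamma_re (s := s + 2) (by simp; linarith)
  have hnorm : 1 + s.im ^ 2 ≤ ‖s + 1‖ * ‖s‖ := by
    have h1 : 1 + s.im ^ 2 ≤ ‖s + 1‖ ^ 2 := by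
      rw [Complex.sq_norm, normSq_apply]; simp only [add_re, one_re, add_im, one_im]; nlinarith
    have h2 : 1 + s.im ^ 2 ≤ ‖s‖ ^ 2 := by
      rw [Complex.sq_norm, normSq_apply]; nlinarith
    nlinarith [norm_nonneg s, norm_nonneg (s + 1), mul_nonneg (norm_nonneg s) (norm_nonneg (s + 1))]
  rw [le_div_iff₀ (by positivity)]
  calc ‖Complex.Gamma s‖ * (1 + s.im ^ 2) ≤ ‖Complex.Gamma s‖ * (‖s + 1‖ * ‖s‖) := by gcongr
    _ = ‖Complex.Gamma (s + 2)‖ := by rw [hrec, norm_mul, norm_mul]; ring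
    _ ≤ Real.Gamma (s.re + 2) := hGamma

lemma differentiableAt_riemannZeta_sq_mul_Gamma {s : ℂ} (hs : 1 < s.re) :
    DifferentiableAt ℂ (fun s => riemannZeta s ^ 2 * Complex.Gamma s) s := by
  have hζ : s ≠ 1 := fun h => by simp [h] at hs
  have hΓ (m : ℕ) : s ≠ -m := fun h => by
    have : s.re = -m := by simp [h]
    linarith [Nat.cast_nonneg (α := ℝ) m]
  exact ((differentiableAt_riemannZeta hζ).pow 2).mul (differentiableAt_Gamma s hΓ)

theorem verticalIntegrable_riemannZeta_sq_mul_Gamma {σ : ℝ} (hσ : 1 < σ) :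
    VerticalIntegrable (fun s => riemannZeta s ^ 2 * Complex.Gamma s) σ := by
  have hre (y : ℝ) : ((σ : ℂ) + y * I).re = σ := by simp
  have hcont : Continuous fun y : ℝ =>
      riemannZeta (σ + y * I) ^ 2 * Complex.Gamma (σ + y * I) :=
    continuous_iff_continuousAt.mpr fun y =>
      ((differentiableAt_riemannZeta_sq_mul_Gamma (by rwa [hre])).continuousAt.comp
        (f := fun y : ℝ => (σ : ℂ) + y * I) (by fun_prop))
  set C := ∑' n : ℕ, 1 / ((n : ℝ) + 1) ^ σ
  refine (integrable_inv_one_add_sq.const_mul (C ^ 2 * Real.Gamma (σ + 2))).mono'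
    hcont.aestronglyMeasurable (Eventually.of_forall fun y => ?_)
  have hζ : ‖riemannZeta (σ + y * I)‖ ≤ C := by
    simpa only [hre] using norm_riemannZeta_le (s := σ + y * I) (by rwa [hre])
  have hΓ : ‖Complex.Gamma (σ + y * I)‖ ≤ Real.Gamma (σ + 2) / (1 + y ^ 2) := by
    simpa [hre] using norm_Gamma_le_of_one_le_re (s := σ + y * I) (by rw [hre]; exact hσ.le)
  rw [norm_mul, norm_pow, mul_assoc, ← div_eq_mul_inv]
  gcongr

theorem mellinInv_riemannZeta_sq_mul_Gamma {σ t : ℝ} (hσ : 1 < σ) (ht : 0 < t) :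
    mellinInv σ (fun s => riemannZeta s ^ 2 * Complex.Gamma s) t = lambertSeries t := by
  have hline : ∀ y : ℝ, mellin (fun t => (lambertSeries t : ℂ)) (σ + y * I) =
      riemannZeta (σ + y * I) ^ 2 * Complex.Gamma (σ + y * I) := fun y =>
    mellin_lambertSeries (by simpa using hσ)
  have hV : VerticalIntegrable (mellin fun t => (lambertSeries t : ℂ)) σ := by
    simpa only [VerticalIntegrable, hline] using verticalIntegrable_riemannZeta_sq_mul_Gamma hσ
  have hinv := mellinInv_mellin_eq σ _ ht (mellinConvergent_lambertSeries (by simpa using hσ)) hV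
    (continuous_ofReal.continuousAt.comp (continuousAt_lambertSeries ht))
  simpa only [mellinInv, hline] using hinv

lemma Complex.VerticalIntegrable.integrable_cpow_neg_mul {f : ℂ → ℂ} {σ t : ℝ}
    (hf : VerticalIntegrable f σ) (ht : 0 < t) :
    Integrable fun y : ℝ => (t : ℂ) ^ (-(σ + y * I)) * f (σ + y * I) := by
  refine hf.bdd_mul (c := t ^ (-σ))
    ((Continuous.const_cpow (by fun_prop) (.inl (ofReal_ne_zero.mpr ht.ne'))).aestronglyMeasurable)
    (Eventually.of_forall fun y => ?_)
  rw [norm_cpow_eq_rpow_re_of_pos ht]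
  simp

/-- Mellin inversion along `Re s = 3`: for `t > 0`,
`Σ_{l≥1} 1/(e^{tl}-1) = (1/(2π)) ∫_ℝ ζ(3+iy)² Γ(3+iy) t^{-(3+iy)} dy`,
the integrand being integrable. -/
theorem mellin_inversion_zeta_sq (t : ℝ) (ht : 0 < t) :
    Integrable (fun y : ℝ =>
      riemannZeta (3 + I * y) ^ 2 * Complex.Gamma (3 + I * y) *
        Complex.exp (-(3 + I * y) * Real.log t)) ∧
    ((∑' l : ℕ, 1 / (Real.exp (t * (l + 1)) - 1) : ℝ) : ℂ) =
      (1 / (2 * Real.pi)) *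
        ∫ y : ℝ, riemannZeta (3 + I * y) ^ 2 * Complex.Gamma (3 + I * y) *
          Complex.exp (-(3 + I * y) * Real.log t) := by
  have hσ : (1 : ℝ) < 3 := by norm_num
  have hintegrand : (fun y : ℝ => (t : ℂ) ^ (-((3 : ℝ) + y * I)) *
      (riemannZeta ((3 : ℝ) + y * I) ^ 2 * Complex.Gamma ((3 : ℝ) + y * I))) =
      fun y : ℝ => riemannZeta (3 + I * y) ^ 2 * Complex.Gamma (3 + I * y) *
        Complex.exp (-(3 + I * y) * Real.log t) := by
    ext y
    rw [cpow_def_of_ne_zero (ofReal_ne_zero.mpr ht.ne'), ← ofReal_log ht.le]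
    push_cast
    ring_nf
  constructor
  · rw [← hintegrand]
    exact (verticalIntegrable_riemannZeta_sq_mul_Gamma hσ).integrable_cpow_neg_mul ht
  · rw [← lambertSeries, ← mellinInv_riemannZeta_sq_mul_Gamma hσ ht, mellinInv, ← hintegrand]
    simp only [real_smul, smul_eq_mul]
    push_cast
    rfl
end

section
/- Let k ≥ 2 be an integer and let x be a real number with 0 < x < 1. Then Σ_{l=1}^{k-1} [Γ(l - x)/(Γ(1-x)·Γ(l))] · [ 1/l - (l+1)/k + (l-1)/(k-1) ] = -(1/x)·[ 2·Γ(k+1-x)/(Γ(k+1)·Γ(3-x)) - 1 ], where Γ is the Gamma function. -/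
/-!
With `c l = Γ(l - x) / Γ(l)` we have `c (l + 1) = (l - x) / l * c l`, so the summand is
hypergeometric in `l` and Gosper's algorithm applies: it is the forward difference of
`c l * g l` for an explicit quadratic `g` (found by matching the coefficients of `1 / l`, `1` and
`l`). The sum telescopes to `(c k * g k - c 1 * g 1) / Γ(1 - x)`, and the recurrence
`Γ(s + 1) = s Γ(s)` turns this into the right-hand side.
-/

open Real

lemma Real.Gamma_add_one_div_Gamma_add_one {s t : ℝ} (hs : s ≠ 0) (ht : t ≠ 0) :
    Gamma (s + 1) / Gamma (t + 1) = s / t * (Gamma s / Gamma t) := by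
  rw [Gamma_add_one hs, Gamma_add_one ht, mul_div_mul_comm]

noncomputable def gosperFactor (k x l : ℝ) : ℝ :=
  -1 / x + (l - 1) * ((l + 2) * (1 - x) - 2 * k * (2 - x) + 2 * x) /
    (k * (k - 1) * (2 - x) * (1 - x))

noncomputable def gosperAntidiff (k x l : ℝ) : ℝ :=
  Gamma (l - x) / Gamma l * gosperFactor k x l

lemma gosperFactor_one (k x : ℝ) : gosperFactor k x 1 = -1 / x := by
  simp [gosperFactor]

lemma mul_gosperFactor_add_one_sub {k x l : ℝ} (hk0 : k ≠ 0) (hk1 : k - 1 ≠ 0) (hx0 : x ≠ 0)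
    (hx1 : 1 - x ≠ 0) (hx2 : 2 - x ≠ 0) (hl : l ≠ 0) :
    (l - x) / l * gosperFactor k x (l + 1) - gosperFactor k x l =
      1 / l - (l + 1) / k + (l - 1) / (k - 1) := by
  unfold gosperFactor
  field_simp
  ring

lemma gosperAntidiff_add_one_sub {k x l : ℝ} (hk0 : k ≠ 0) (hk1 : k - 1 ≠ 0) (hx0 : x ≠ 0)
    (hx1 : 1 - x ≠ 0) (hx2 : 2 - x ≠ 0) (hl : l ≠ 0) (hlx : l - x ≠ 0) :
    gosperAntidiff k x (l + 1) - gosperAntidiff k x l =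
      Gamma (l - x) / Gamma l * (1 / l - (l + 1) / k + (l - 1) / (k - 1)) := by
  rw [← mul_gosperFactor_add_one_sub hk0 hk1 hx0 hx1 hx2 hl, gosperAntidiff, gosperAntidiff,
    add_sub_right_comm, Gamma_add_one_div_Gamma_add_one hlx hl]
  ring

lemma gosperAntidiff_one (k x : ℝ) : gosperAntidiff k x 1 = -Gamma (1 - x) / x := by
  rw [gosperAntidiff, gosperFactor_one, Gamma_one]
  ring

lemma gosperFactor_self {k x : ℝ} (hk0 : k ≠ 0) (hk1 : k - 1 ≠ 0) (hx0 : x ≠ 0)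
    (hx1 : 1 - x ≠ 0) (hx2 : 2 - x ≠ 0) :
    gosperFactor k x k = -2 * (k - x) / (x * k * (2 - x) * (1 - x)) := by
  unfold gosperFactor
  field_simp
  ring

lemma sum_Gamma_div_Gamma_mul_eq {k : ℕ} (hk : 2 ≤ k) {x : ℝ} (hx : ∀ n : ℕ, x ≠ n) :
    ∑ l ∈ Finset.Icc 1 (k - 1),
      Gamma (l - x) / Gamma l * (1 / (l : ℝ) - (l + 1) / k + (l - 1) / (k - 1)) =
      gosperAntidiff k x k + Gamma (1 - x) / x := by
  have hk2 : (2 : ℝ) ≤ k := by exact_mod_cast hk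
  have hsub (n : ℕ) : (n : ℝ) - x ≠ 0 := sub_ne_zero.2 (hx n).symm
  have hterm : ∀ l ∈ Finset.Icc 1 (k - 1),
      Gamma (l - x) / Gamma l * (1 / (l : ℝ) - (l + 1) / k + (l - 1) / (k - 1)) =
        gosperAntidiff k x ((l + 1 : ℕ) : ℝ) - gosperAntidiff k x l := by
    intro l hl
    have hl : (1 : ℝ) ≤ l := by exact_mod_cast (Finset.mem_Icc.1 hl).1
    push_cast
    exact (gosperAntidiff_add_one_sub (by linarith) (by linarith) (by simpa using hx 0)
      (by simpa using hsub 1) (by simpa using hsub 2) (by linarith) (hsub l)).symm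
  rw [Finset.sum_congr rfl hterm,
    Finset.sum_Icc_sub (by omega) fun l : ℕ ↦ gosperAntidiff k x l,
    Nat.sub_add_cancel (by omega), Nat.cast_one, gosperAntidiff_one]
  ring

/-- For an integer `k ≥ 2` and `0 < x < 1`:
`Σ_{l=1}^{k-1} Γ(l-x)/(Γ(1-x)Γ(l)) · (1/l - (l+1)/k + (l-1)/(k-1))
  = -(1/x)(2Γ(k+1-x)/(Γ(k+1)Γ(3-x)) - 1)`. -/
theorem gamma_sum_identity (k : ℕ) (hk : 2 ≤ k) (x : ℝ) (hx0 : 0 < x) (hx1 : x < 1) :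
    ∑ l ∈ Finset.Icc 1 (k - 1),
      Real.Gamma ((l : ℝ) - x) / (Real.Gamma (1 - x) * Real.Gamma l) *
        (1 / (l : ℝ) - ((l : ℝ) + 1) / k + ((l : ℝ) - 1) / ((k : ℝ) - 1)) =
      -(1 / x) * (2 * Real.Gamma ((k : ℝ) + 1 - x) /
        (Real.Gamma ((k : ℝ) + 1) * Real.Gamma (3 - x)) - 1) := by
  have hx_nat (n : ℕ) : x ≠ n := by
    rintro rfl
    have : 0 < n := by exact_mod_cast hx0
    have : n < 1 := by exact_mod_cast hx1
    omega
  have hk2 : (2 : ℝ) ≤ k := by exact_mod_cast hk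
  have hx2 : 2 - x ≠ 0 := by linarith
  have hG1 : Gamma (1 - x) ≠ 0 := (Gamma_pos_of_pos (by linarith)).ne'
  have hGk : Gamma k ≠ 0 := (Gamma_pos_of_pos (by linarith)).ne'
  have hG3 : Gamma (3 - x) = (2 - x) * (1 - x) * Gamma (1 - x) := by
    rw [show (3 : ℝ) - x = 1 - x + 1 + 1 by ring, Gamma_add_one (by linarith),
      Gamma_add_one (by linarith)]
    ring
  have hGkx : Gamma (k + 1 - x) = (k - x) * Gamma (k - x) := by
    rw [show (k : ℝ) + 1 - x = k - x + 1 by ring, Gamma_add_one (by linarith)]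
  simp_rw [mul_comm (Gamma (1 - x)), ← div_div, div_mul_eq_mul_div _ (Gamma (1 - x)),
    ← Finset.sum_div]
  rw [sum_Gamma_div_Gamma_mul_eq hk hx_nat, gosperAntidiff,
    gosperFactor_self (by linarith) (by linarith) hx0.ne' (by linarith) hx2,
    hG3, hGkx, Gamma_add_one (by linarith)]
  field_simp
  ring
end

section
/- Let r ≥ 1 be a fixed integer. For a permutation σ of {1, …, n}, say position i is a left-to-right maximum if σ(i) > σ(j) for all j < i; if the positions of the left-to-right maxima are i_1 < ⋯ < i_m, define P_r(σ) = i_{m-r+1} when m ≥ r and P_r(σ) = 0 otherwise. Then the average (1/n!)·Σ_{σ ∈ S_n} P_r(σ) equals n/2^r + o(n) as n → ∞; that is, (1/(n·n!))·Σ_{σ ∈ S_n} P_r(σ) → 2^{-r}. -/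
open Filter

/-- The set of positions of the strict left-to-right maxima of a permutation
`σ` of `Fin n` (positions are elements of `Fin n`). -/
def permLRMaxSet {n : ℕ} (σ : Equiv.Perm (Fin n)) : Finset (Fin n) :=
  Finset.univ.filter fun i => ∀ j, j < i → σ j < σ i

/-- `P_r(σ)`: the 1-based position of the `r`-th left-to-right maximum of `σ`
counted from the right (its position among `{1,…,n}`), if `σ` has at least `r`
left-to-right maxima, and `0` otherwise. -/
def rthLRMaxPosFromRight (r : ℕ) {n : ℕ} (σ : Equiv.Perm (Fin n)) : ℕ :=
  if r ≤ (permLRMaxSet σ).card then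
    (((permLRMaxSet σ).sort (· ≤ ·)).map (fun i => (i : ℕ) + 1)).getD
      ((permLRMaxSet σ).card - r) 0
  else 0

/-!
Write a permutation of `{1,…,m+1}` as its last value `v` preceded by a permutation `τ` of
`{1,…,m}` whose values are shifted past `v`. Its left-to-right maxima are those of `τ`, together
with the last position exactly when `v = m+1`. Listing the positions of the maxima from right to
left, the mean `E_s(n)` of the `s`-th entry over `S_n` therefore satisfies
`n E_0(n) = ∑_{m<n} (m+1)` and `n E_{s+1}(n) = ∑_{m<n} E_s(m)`. Since `x_m / m → L` implies
`(∑_{m<n} x_m) / n² → L/2`, induction on `s` gives `E_s(n) / n → 2^{-(s+1)}`.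
-/

open Finset Topology Asymptotics

lemma sum_range_two_mul_add_one (n : ℕ) :
    ∑ m ∈ range n, (2 * (m : ℝ) + 1) = (n : ℝ) ^ 2 := by
  induction n with
  | zero => simp
  | succ n ih => rw [sum_range_succ, ih]; push_cast; ring

lemma tendsto_sum_range_div_sq {x : ℕ → ℝ} {L : ℝ}
    (hx : Tendsto (fun m : ℕ => x m / m) atTop (𝓝 L)) :
    Tendsto (fun n : ℕ => (∑ m ∈ range n, x m) / (n : ℝ) ^ 2) atTop (𝓝 (L / 2)) := by
  have hlin : (fun m : ℕ => x m - L * m) =o[atTop] (fun m : ℕ => (m : ℝ)) := by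
    rw [isLittleO_iff_tendsto' (by filter_upwards [eventually_ne_atTop 0] with m hm h; simp_all)]
    refine (tendsto_sub_nhds_zero_iff.mpr hx).congr' ?_
    filter_upwards [eventually_ne_atTop 0] with m hm
    field_simp
  have hconst : (fun _ : ℕ => L / 2) =o[atTop] (fun m : ℕ => (m : ℝ)) :=
    isLittleO_const_left.mpr (Or.inr (tendsto_norm_atTop_atTop.comp tendsto_natCast_atTop_atTop))
  have hodd : (fun m : ℕ => (m : ℝ)) =O[atTop] (fun m : ℕ => 2 * (m : ℝ) + 1) :=
    IsBigO.of_bound 1 (Eventually.of_forall fun m => by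
      simp only [Real.norm_eq_abs, abs_of_nonneg (by positivity : (0:ℝ) ≤ m),
        abs_of_nonneg (by positivity : (0:ℝ) ≤ 2 * m + 1)]; linarith)
  -- compare with `L/2 * (2m+1)`, whose partial sums are exactly `L/2 * n²`
  have hdev :
      (fun m : ℕ => x m - L / 2 * (2 * m + 1)) =o[atTop] (fun m : ℕ => 2 * (m : ℝ) + 1) :=
    ((hlin.sub hconst).trans_isBigO hodd).congr_left fun m => by ring
  have hsum := hdev.sum_range (fun m => by positivity) (by
    simp only [sum_range_two_mul_add_one]
    exact (tendsto_pow_atTop two_ne_zero).comp tendsto_natCast_atTop_atTop)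
  simp only [sum_range_two_mul_add_one, sum_sub_distrib, ← mul_sum] at hsum
  have := hsum.tendsto_div_nhds_zero.add_const (L / 2)
  rw [zero_add] at this
  refine this.congr' ?_
  filter_upwards [eventually_ne_atTop 0] with n hn
  field_simp
  ring

def permSnoc {m : ℕ} (v : Fin (m + 1)) (τ : Equiv.Perm (Fin m)) : Equiv.Perm (Fin (m + 1)) :=
  (finSuccEquiv' (Fin.last m)).trans ((Equiv.optionCongr τ).trans (finSuccEquiv' v).symm)

section permSnoc

variable {m : ℕ} (v : Fin (m + 1)) (τ : Equiv.Perm (Fin m))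

@[simp]
lemma permSnoc_last : permSnoc v τ (Fin.last m) = v := by
  simp [permSnoc]

@[simp]
lemma permSnoc_castSucc (p : Fin m) : permSnoc v τ p.castSucc = v.succAbove (τ p) := by
  simp [permSnoc, finSuccEquiv'_last_apply_castSucc]

lemma permSnoc_bijective :
    Function.Bijective fun vτ : Fin (m + 1) × Equiv.Perm (Fin m) => permSnoc vτ.1 vτ.2 := by
  refine (Fintype.bijective_iff_injective_and_card _).mpr
    ⟨?_, by simp [Fintype.card_perm, Nat.factorial_succ]⟩
  rintro ⟨v, τ⟩ ⟨v', τ'⟩ h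
  have hv : v = v' := by simpa using congrArg (· (Fin.last m)) h
  subst hv
  refine Prod.ext rfl (Equiv.ext fun p => v.succAbove_right_injective ?_)
  simpa using congrArg (· p.castSucc) h

lemma last_mem_permLRMaxSet_permSnoc :
    Fin.last m ∈ permLRMaxSet (permSnoc v τ) ↔ v = Fin.last m := by
  simp only [permLRMaxSet, mem_filter, mem_univ, true_and, permSnoc_last]
  constructor
  · intro h
    by_contra hv
    set j := (permSnoc v τ).symm (Fin.last m)
    have hσj : permSnoc v τ j = Fin.last m := Equiv.apply_symm_apply _ _
    have hj : j < Fin.last m := lt_of_le_of_ne (Fin.le_last j) fun hj => by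
      rw [hj, permSnoc_last] at hσj
      exact hv hσj
    exact (h j hj).not_ge (hσj ▸ Fin.le_last v)
  · rintro rfl j hj
    obtain ⟨q, rfl⟩ := Fin.exists_castSucc_eq.mpr hj.ne
    simp

lemma castSucc_mem_permLRMaxSet_permSnoc (p : Fin m) :
    p.castSucc ∈ permLRMaxSet (permSnoc v τ) ↔ p ∈ permLRMaxSet τ := by
  simp only [permLRMaxSet, mem_filter, mem_univ, true_and, Fin.forall_fin_succ',
    permSnoc_castSucc, Fin.castSucc_lt_castSucc_iff, Fin.succAbove_lt_succAbove_iff,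
    (Fin.castSucc_lt_last p).not_gt, false_imp_iff, and_true]

lemma permLRMaxSet_permSnoc :
    permLRMaxSet (permSnoc v τ) = if v = Fin.last m then
      insert (Fin.last m) ((permLRMaxSet τ).map Fin.castSuccEmb)
    else (permLRMaxSet τ).map Fin.castSuccEmb := by
  ext i
  induction i using Fin.lastCases with
  | last => split_ifs with hv <;> simp [last_mem_permLRMaxSet_permSnoc, hv]
  | cast p => split_ifs <;> simp [castSucc_mem_permLRMaxSet_permSnoc, (Fin.castSucc_lt_last p).ne]

end permSnoc

def lrMaxPositions {n : ℕ} (σ : Equiv.Perm (Fin n)) : List ℕ :=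
  ((permLRMaxSet σ).sort (· ≥ ·)).map fun i : Fin n => (i : ℕ) + 1

lemma rthLRMaxPosFromRight_succ {n : ℕ} (s : ℕ) (σ : Equiv.Perm (Fin n)) :
    rthLRMaxPosFromRight (s + 1) σ = (lrMaxPositions σ).getD s 0 := by
  have hrev : (permLRMaxSet σ).sort (· ≤ ·) = ((permLRMaxSet σ).sort (· ≥ ·)).reverse :=
    List.SortedLT.eq_reverse_of_mem_iff_of_sortedGT (by simp) (sortedLT_sort _) (sortedGT_sort _)
  -- `rthLRMaxPosFromRight` coerces the sorted `List (Fin n)` to `List ℕ` through the list monad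
  have hcoe : ∀ l : List (Fin n), (l >>= fun a => pure (a : ℕ)) = l.map Fin.val :=
    fun l => List.flatMap_pure_eq_map _ _
  rw [rthLRMaxPosFromRight, lrMaxPositions, hcoe, List.map_map, hrev, List.map_reverse]
  split_ifs with hs
  · rw [List.getD_reverse _ (by simp only [List.length_map, length_sort]; omega)]
    congr 1
    simp only [List.length_map, length_sort]
    omega
  · exact (List.getD_eq_default _ _ (by simp only [List.length_map, length_sort]; omega)).symm

lemma lrMaxPositions_permSnoc {m : ℕ} (v : Fin (m + 1)) (τ : Equiv.Perm (Fin m)) :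
    lrMaxPositions (permSnoc v τ) =
      if v = Fin.last m then (m + 1) :: lrMaxPositions τ else lrMaxPositions τ := by
  have hmap : ((permLRMaxSet τ).map Fin.castSuccEmb).sort (· ≥ ·) =
      ((permLRMaxSet τ).sort (· ≥ ·)).map Fin.castSuccEmb :=
    (map_sort _ _ _ _ fun a _ b _ => Fin.castSucc_le_castSucc_iff.symm).symm
  rw [lrMaxPositions, lrMaxPositions, permLRMaxSet_permSnoc]
  split_ifs
  · rw [sort_insert _ (fun b _ => Fin.le_last b) (by simp [(Fin.castSucc_lt_last _).ne]), hmap]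
    simp
  · rw [hmap]
    simp

lemma sum_perm_succ_lrMaxPositions {M : Type*} [AddCommMonoid M] (m : ℕ) (F : List ℕ → M) :
    ∑ σ : Equiv.Perm (Fin (m + 1)), F (lrMaxPositions σ) =
      ∑ τ : Equiv.Perm (Fin m), F ((m + 1) :: lrMaxPositions τ) +
        m • ∑ τ : Equiv.Perm (Fin m), F (lrMaxPositions τ) := by
  rw [← Fintype.sum_bijective _ permSnoc_bijective _ _ fun _ => rfl, Fintype.sum_prod_type,
    Fin.sum_univ_castSucc]
  simp [lrMaxPositions_permSnoc, (Fin.castSucc_lt_last _).ne, add_comm]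

noncomputable def lrMaxMean (F : List ℕ → ℝ) (n : ℕ) : ℝ :=
  (∑ σ : Equiv.Perm (Fin n), F (lrMaxPositions σ)) / n.factorial

lemma lrMaxMean_const (c : ℝ) (n : ℕ) : lrMaxMean (fun _ => c) n = c := by
  simp [lrMaxMean, Fintype.card_perm, Nat.factorial_ne_zero]

lemma succ_mul_lrMaxMean_succ (F : List ℕ → ℝ) (m : ℕ) :
    (m + 1 : ℝ) * lrMaxMean F (m + 1) =
      lrMaxMean (fun l => F ((m + 1) :: l)) m + m * lrMaxMean F m := by
  simp only [lrMaxMean, sum_perm_succ_lrMaxPositions, nsmul_eq_mul, Nat.factorial_succ]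
  push_cast
  field_simp

lemma natCast_mul_lrMaxMean (F : List ℕ → ℝ) (n : ℕ) :
    n * lrMaxMean F n = ∑ m ∈ range n, lrMaxMean (fun l => F ((m + 1) :: l)) m := by
  induction n with
  | zero => simp
  | succ n ih => rw [sum_range_succ, ← ih, Nat.cast_succ, succ_mul_lrMaxMean_succ, add_comm]

lemma lrMaxMean_div_eq (F : List ℕ → ℝ) (n : ℕ) :
    lrMaxMean F n / n =
      (∑ m ∈ range n, lrMaxMean (fun l => F ((m + 1) :: l)) m) / (n : ℝ) ^ 2 := by
  rcases eq_or_ne (n : ℝ) 0 with hn | hn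
  · simp [hn]
  · rw [← natCast_mul_lrMaxMean, sq, mul_div_mul_left _ _ hn]

lemma tendsto_lrMaxMean_getD_div (s : ℕ) :
    Tendsto (fun n : ℕ => lrMaxMean (fun l => (l.getD s 0 : ℝ)) n / n) atTop
      (𝓝 ((2 : ℝ)⁻¹ ^ (s + 1))) := by
  induction s with
  | zero =>
    simp only [lrMaxMean_div_eq, List.getD_cons_zero, lrMaxMean_const]
    have hlin : Tendsto (fun m : ℕ => ((m + 1 : ℕ) : ℝ) / m) atTop (𝓝 1) := by
      simpa [add_comm] using tendsto_add_mul_div_add_mul_atTop_nhds (1 : ℝ) 0 1 one_ne_zero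
    convert tendsto_sum_range_div_sq hlin using 2
    norm_num
  | succ s ih =>
    simp only [lrMaxMean_div_eq, List.getD_cons_succ]
    convert tendsto_sum_range_div_sq ih using 2
    ring

/-- The average position of the `r`-th left-to-right maximum from the right of a
random permutation of `{1,…,n}` is `n/2^r + o(n)`:
`(1/(n·n!)) Σ_{σ ∈ S_n} P_r(σ) → 2^{-r}`. -/
theorem average_rth_lr_max_position_permutations (r : ℕ) (hr : 1 ≤ r) :
    Tendsto (fun n : ℕ =>
        (∑ σ : Equiv.Perm (Fin n), (rthLRMaxPosFromRight r σ : ℝ)) /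
          ((n : ℝ) * n.factorial))
      atTop (nhds ((2 : ℝ)⁻¹ ^ r)) := by
  obtain ⟨s, rfl⟩ : ∃ s, r = s + 1 := ⟨r - 1, by omega⟩
  refine (tendsto_lrMaxMean_getD_div s).congr fun n => ?_
  rw [lrMaxMean, mul_comm, ← div_div]
  simp only [rthLRMaxPosFromRight_succ]
end
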